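/- arXiv:2306.11357 — 5 statements merged into one kernel-verified Lean document; each statement's English description precedes it below -/
import Mathlib

section
/- For every w ∈ ℝ and each i ∈ {1,2,3}, the map trop(sᵢ) is an involution of ℝ³ that maps the level set {x ∈ ℝ³ : f₀(x) = w} bijectively onto itself. In particular, the skeleton Sk(a,b,c,d) is invariant under trop(s₁), trop(s₂) and trop(s₃). -/
noncomputable section

abbrev R3 : Type := ℝ × ℝ × ℝ

/-- The minimum of the tropical monomials of the Markov cubic, computed in `WithTop ℝ`
(a term equal to `⊤ = ∞` is automatically irrelevant for the minimum). -/
def tmin (a b c d : WithTop ℝ) (x : R3) : WithTop ℝ :=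
  min (min (min ((2 * x.1 : ℝ) : WithTop ℝ) ((2 * x.2.1 : ℝ) : WithTop ℝ))
        (min ((2 * x.2.2 : ℝ) : WithTop ℝ) (a + (x.1 : WithTop ℝ))))
    (min (min (b + (x.2.1 : WithTop ℝ)) (c + (x.2.2 : WithTop ℝ))) d)

/-- The function `f₀(x) = min(2x₁,2x₂,2x₃,a+x₁,b+x₂,c+x₃,d) − (x₁+x₂+x₃)`,
with `∞` terms omitted from the minimum.  (The minimum is never `⊤` since the
real terms `2xᵢ` are always present, so `untop' 0` extracts its real value.) -/
def f0 (a b c d : WithTop ℝ) (x : R3) : ℝ :=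
  WithTop.untopD 0 (tmin a b c d x) - (x.1 + x.2.1 + x.2.2)

/-- The skeleton `Sk(a,b,c,d)`. -/
def Sk (a b c d : WithTop ℝ) : Set R3 := {x | f0 a b c d x = 0}

/-- The tropicalized Vieta involution `trop(s₁)`. -/
def trop1 (a b c d : WithTop ℝ) (x : R3) : R3 :=
  (WithTop.untopD 0 (min (min ((2 * x.2.1 : ℝ) : WithTop ℝ) ((2 * x.2.2 : ℝ) : WithTop ℝ))
      (min (min (b + (x.2.1 : WithTop ℝ)) (c + (x.2.2 : WithTop ℝ))) d)) - x.1,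
    x.2.1, x.2.2)

/-- The tropicalized Vieta involution `trop(s₂)`. -/
def trop2 (a b c d : WithTop ℝ) (x : R3) : R3 :=
  (x.1,
    WithTop.untopD 0 (min (min ((2 * x.1 : ℝ) : WithTop ℝ) ((2 * x.2.2 : ℝ) : WithTop ℝ))
      (min (min (a + (x.1 : WithTop ℝ)) (c + (x.2.2 : WithTop ℝ))) d)) - x.2.1,
    x.2.2)

/-- The tropicalized Vieta involution `trop(s₃)`. -/
def trop3 (a b c d : WithTop ℝ) (x : R3) : R3 :=
  (x.1, x.2.1,
    WithTop.untopD 0 (min (min ((2 * x.1 : ℝ) : WithTop ℝ) ((2 * x.2.1 : ℝ) : WithTop ℝ))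
      (min (min (a + (x.1 : WithTop ℝ)) (b + (x.2.1 : WithTop ℝ))) d)) - x.2.2)

/-- The three tropicalized Vieta involutions, indexed by `Fin 3`. -/
def trop (a b c d : WithTop ℝ) : Fin 3 → R3 → R3 :=
  ![trop1 a b c d, trop2 a b c d, trop3 a b c d]

/-! ### Auxiliary lemmas -/

private lemma rearr1 (A B C D E F G : WithTop ℝ) :
    min (min (min A B) (min C D)) (min (min E F) G)
      = min (min A D) (min (min B C) (min (min E F) G)) := by ac_rfl

private lemma rearr2 (A B C D E F G : WithTop ℝ) :
    min (min (min A B) (min C D)) (min (min E F) G)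
      = min (min B E) (min (min A C) (min (min D F) G)) := by ac_rfl

private lemma rearr3 (A B C D E F G : WithTop ℝ) :
    min (min (min A B) (min C D)) (min (min E F) G)
      = min (min C F) (min (min A B) (min (min D E) G)) := by ac_rfl

private lemma coe_untop_of_le {Q : WithTop ℝ} {r : ℝ} (h : Q ≤ (r : WithTop ℝ)) :
    ((WithTop.untopD 0 Q : ℝ) : WithTop ℝ) = Q := by
  lift Q to ℝ using (h.trans_lt (WithTop.coe_lt_top r)).ne
  simp

private lemma core (a : WithTop ℝ) (x P : ℝ) :
    WithTop.untopD 0 (min (min ((2 * (P - x) : ℝ) : WithTop ℝ) (a + ((P - x : ℝ) : WithTop ℝ)))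
        ((P : ℝ) : WithTop ℝ)) - (P - x)
      = WithTop.untopD 0 (min (min ((2 * x : ℝ) : WithTop ℝ) (a + ((x : ℝ) : WithTop ℝ)))
          ((P : ℝ) : WithTop ℝ)) - x := by
  induction a using WithTop.recTopCoe with
  | top =>
      rw [WithTop.top_add, WithTop.top_add, min_eq_left le_top, min_eq_left le_top,
        ← WithTop.coe_min, ← WithTop.coe_min, WithTop.untopD_coe, WithTop.untopD_coe]
      simp only [min_def]; split_ifs <;> linarith
  | coe a =>
      rw [← WithTop.coe_add, ← WithTop.coe_add, ← WithTop.coe_min, ← WithTop.coe_min,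
        ← WithTop.coe_min, ← WithTop.coe_min, WithTop.untopD_coe, WithTop.untopD_coe]
      simp only [min_def]; split_ifs <;> linarith

private lemma inv1 (a b c d : WithTop ℝ) : Function.Involutive (trop1 a b c d) := by
  rintro ⟨x₁, x₂, x₃⟩
  exact Prod.ext (by simp only [trop1]; ring) rfl

private lemma inv2 (a b c d : WithTop ℝ) : Function.Involutive (trop2 a b c d) := by
  rintro ⟨x₁, x₂, x₃⟩
  exact Prod.ext rfl (Prod.ext (by simp only [trop2]; ring) rfl)

private lemma inv3 (a b c d : WithTop ℝ) : Function.Involutive (trop3 a b c d) := by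
  rintro ⟨x₁, x₂, x₃⟩
  exact Prod.ext rfl (Prod.ext rfl (by simp only [trop3]; ring))

private lemma pres1 (a b c d : WithTop ℝ) (x : R3) :
    f0 a b c d (trop1 a b c d x) = f0 a b c d x := by
  obtain ⟨x₁, x₂, x₃⟩ := x
  simp only [f0, tmin, trop1]
  set Q : WithTop ℝ := min (min ((2 * x₂ : ℝ) : WithTop ℝ) ((2 * x₃ : ℝ) : WithTop ℝ))
      (min (min (b + (x₂ : WithTop ℝ)) (c + (x₃ : WithTop ℝ))) d) with hQdef
  have hQ : ((WithTop.untopD 0 Q : ℝ) : WithTop ℝ) = Q :=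
    coe_untop_of_le ((min_le_left _ _).trans (min_le_left _ _))
  rw [rearr1 ((2 * (WithTop.untopD 0 Q - x₁) : ℝ) : WithTop ℝ) _ _ (a + ((WithTop.untopD 0 Q - x₁ : ℝ) : WithTop ℝ)),
    rearr1 ((2 * x₁ : ℝ) : WithTop ℝ) _ _ (a + ((x₁ : ℝ) : WithTop ℝ))]
  rw [← hQdef]
  have h := core a x₁ (WithTop.untopD 0 Q)
  rw [hQ] at h
  linarith [h]

private lemma pres2 (a b c d : WithTop ℝ) (x : R3) :
    f0 a b c d (trop2 a b c d x) = f0 a b c d x := by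
  obtain ⟨x₁, x₂, x₃⟩ := x
  simp only [f0, tmin, trop2]
  set Q : WithTop ℝ := min (min ((2 * x₁ : ℝ) : WithTop ℝ) ((2 * x₃ : ℝ) : WithTop ℝ))
      (min (min (a + (x₁ : WithTop ℝ)) (c + (x₃ : WithTop ℝ))) d) with hQdef
  have hQ : ((WithTop.untopD 0 Q : ℝ) : WithTop ℝ) = Q :=
    coe_untop_of_le ((min_le_left _ _).trans (min_le_left _ _))
  rw [rearr2 _ ((2 * (WithTop.untopD 0 Q - x₂) : ℝ) : WithTop ℝ) _ _ (b + ((WithTop.untopD 0 Q - x₂ : ℝ) : WithTop ℝ)),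
    rearr2 _ ((2 * x₂ : ℝ) : WithTop ℝ) _ _ (b + ((x₂ : ℝ) : WithTop ℝ))]
  rw [← hQdef]
  have h := core b x₂ (WithTop.untopD 0 Q)
  rw [hQ] at h
  linarith [h]

private lemma pres3 (a b c d : WithTop ℝ) (x : R3) :
    f0 a b c d (trop3 a b c d x) = f0 a b c d x := by
  obtain ⟨x₁, x₂, x₃⟩ := x
  simp only [f0, tmin, trop3]
  set Q : WithTop ℝ := min (min ((2 * x₁ : ℝ) : WithTop ℝ) ((2 * x₂ : ℝ) : WithTop ℝ))
      (min (min (a + (x₁ : WithTop ℝ)) (b + (x₂ : WithTop ℝ))) d) with hQdef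
  have hQ : ((WithTop.untopD 0 Q : ℝ) : WithTop ℝ) = Q :=
    coe_untop_of_le ((min_le_left _ _).trans (min_le_left _ _))
  rw [rearr3 _ _ ((2 * (WithTop.untopD 0 Q - x₃) : ℝ) : WithTop ℝ) _ _ (c + ((WithTop.untopD 0 Q - x₃ : ℝ) : WithTop ℝ)),
    rearr3 _ _ ((2 * x₃ : ℝ) : WithTop ℝ) _ _ (c + ((x₃ : ℝ) : WithTop ℝ))]
  rw [← hQdef]
  have h := core c x₃ (WithTop.untopD 0 Q)
  rw [hQ] at h
  linarith [h]

theorem statement1 (a b c d : WithTop ℝ) :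
    (∀ i : Fin 3, Function.Involutive (trop a b c d i)) ∧
    (∀ (w : ℝ) (i : Fin 3),
      Set.BijOn (trop a b c d i) {x : R3 | f0 a b c d x = w} {x : R3 | f0 a b c d x = w}) ∧
    (∀ i : Fin 3, Set.MapsTo (trop a b c d i) (Sk a b c d) (Sk a b c d)) := by
  have hinv : ∀ i : Fin 3, Function.Involutive (trop a b c d i) := by
    intro i
    fin_cases i
    · exact inv1 a b c d
    · exact inv2 a b c d
    · exact inv3 a b c d
  have hpres : ∀ (i : Fin 3) (x : R3), f0 a b c d (trop a b c d i x) = f0 a b c d x := by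
    intro i
    fin_cases i
    · exact pres1 a b c d
    · exact pres2 a b c d
    · exact pres3 a b c d
  refine ⟨hinv, fun w i => ?_, fun i => ?_⟩
  · refine ⟨fun x hx => ?_, (hinv i).injective.injOn, fun x hx => ?_⟩
    · simpa [Set.mem_setOf_eq, hpres i x] using hx
    · exact ⟨trop a b c d i x, by simpa [Set.mem_setOf_eq, hpres i x] using hx, hinv i x⟩
  · intro x hx
    simpa [Sk, Set.mem_setOf_eq, hpres i x] using hx
end
end

section
/- Let Π = {x ∈ ℝ³ : x₁+x₂+x₃ = 0} with the subspace topology and let v : ℝ³ → Π be the orthogonal projection v(x₁,x₂,x₃) = ((2x₁−x₂−x₃)/3, (−x₁+2x₂−x₃)/3, (−x₁−x₂+2x₃)/3). Then the map x ↦ (f₀(x), v(x)) is a homeomorphism from ℝ³ onto ℝ × Π. -/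
noncomputable section

/-- The dual tropical min, giving the inverse map. -/
def tmin2 (a b c d : WithTop ℝ) (f : ℝ) (y : R3) : WithTop ℝ :=
  min (min (min ((6 * y.1 - 3 * f : ℝ) : WithTop ℝ) ((6 * y.2.1 - 3 * f : ℝ) : WithTop ℝ))
        (min ((6 * y.2.2 - 3 * f : ℝ) : WithTop ℝ)
          ((a + ((y.1 - f : ℝ) : WithTop ℝ)).map (fun r => 3 / 2 * r))))
    (min (min ((b + ((y.2.1 - f : ℝ) : WithTop ℝ)).map (fun r => 3 / 2 * r))
        ((c + ((y.2.2 - f : ℝ) : WithTop ℝ)).map (fun r => 3 / 2 * r)))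
      (d + ((-f : ℝ) : WithTop ℝ)))

def tau (a b c d : WithTop ℝ) (f : ℝ) (y : R3) : ℝ :=
  (tmin2 a b c d f y).untopD 0

lemma aterm_le (a : WithTop ℝ) (y f t : ℝ) :
    ((f + t : ℝ) : WithTop ℝ) ≤ a + ((y + t / 3 : ℝ) : WithTop ℝ) ↔
    ((t : ℝ) : WithTop ℝ) ≤ (a + ((y - f : ℝ) : WithTop ℝ)).map (fun r => 3 / 2 * r) := by
  induction a using WithTop.recTopCoe with
  | top => simp
  | coe r =>
    rw [← WithTop.coe_add, ← WithTop.coe_add, WithTop.map_coe, WithTop.coe_le_coe,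
      WithTop.coe_le_coe]
    constructor <;> intro h <;> linarith

lemma aterm_lt (a : WithTop ℝ) (y f t : ℝ) :
    ((f + t : ℝ) : WithTop ℝ) < a + ((y + t / 3 : ℝ) : WithTop ℝ) ↔
    ((t : ℝ) : WithTop ℝ) < (a + ((y - f : ℝ) : WithTop ℝ)).map (fun r => 3 / 2 * r) := by
  induction a using WithTop.recTopCoe with
  | top => simp [WithTop.add_lt_top]
  | coe r =>
    rw [← WithTop.coe_add, ← WithTop.coe_add, WithTop.map_coe, WithTop.coe_lt_coe,
      WithTop.coe_lt_coe]
    constructor <;> intro h <;> linarith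

lemma dterm_le (d : WithTop ℝ) (f t : ℝ) :
    ((f + t : ℝ) : WithTop ℝ) ≤ d ↔ ((t : ℝ) : WithTop ℝ) ≤ d + ((-f : ℝ) : WithTop ℝ) := by
  induction d using WithTop.recTopCoe with
  | top => simp
  | coe r =>
    rw [← WithTop.coe_add, WithTop.coe_le_coe, WithTop.coe_le_coe]
    constructor <;> intro h <;> linarith

lemma dterm_lt (d : WithTop ℝ) (f t : ℝ) :
    ((f + t : ℝ) : WithTop ℝ) < d ↔ ((t : ℝ) : WithTop ℝ) < d + ((-f : ℝ) : WithTop ℝ) := by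
  induction d using WithTop.recTopCoe with
  | top => simp [WithTop.add_lt_top]
  | coe r =>
    rw [← WithTop.coe_add, WithTop.coe_lt_coe, WithTop.coe_lt_coe]
    constructor <;> intro h <;> linarith

lemma rterm_le (y f t : ℝ) :
    ((f + t : ℝ) : WithTop ℝ) ≤ ((2 * (y + t / 3) : ℝ) : WithTop ℝ) ↔
    ((t : ℝ) : WithTop ℝ) ≤ ((6 * y - 3 * f : ℝ) : WithTop ℝ) := by
  rw [WithTop.coe_le_coe, WithTop.coe_le_coe]
  constructor <;> intro h <;> linarith

lemma rterm_lt (y f t : ℝ) :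
    ((f + t : ℝ) : WithTop ℝ) < ((2 * (y + t / 3) : ℝ) : WithTop ℝ) ↔
    ((t : ℝ) : WithTop ℝ) < ((6 * y - 3 * f : ℝ) : WithTop ℝ) := by
  rw [WithTop.coe_lt_coe, WithTop.coe_lt_coe]
  constructor <;> intro h <;> linarith

lemma key_le (a b c d : WithTop ℝ) (y : R3) (t f : ℝ) :
    ((f + t : ℝ) : WithTop ℝ) ≤ tmin a b c d (y.1 + t / 3, y.2.1 + t / 3, y.2.2 + t / 3) ↔
    ((t : ℝ) : WithTop ℝ) ≤ tmin2 a b c d f y := by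
  simp only [tmin, tmin2, le_min_iff]
  rw [rterm_le y.1 f t, rterm_le y.2.1 f t, rterm_le y.2.2 f t, aterm_le a y.1 f t,
    aterm_le b y.2.1 f t, aterm_le c y.2.2 f t, dterm_le d f t]

lemma key_lt (a b c d : WithTop ℝ) (y : R3) (t f : ℝ) :
    ((f + t : ℝ) : WithTop ℝ) < tmin a b c d (y.1 + t / 3, y.2.1 + t / 3, y.2.2 + t / 3) ↔
    ((t : ℝ) : WithTop ℝ) < tmin2 a b c d f y := by
  simp only [tmin, tmin2, lt_min_iff]
  rw [rterm_lt y.1 f t, rterm_lt y.2.1 f t, rterm_lt y.2.2 f t, aterm_lt a y.1 f t,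
    aterm_lt b y.2.1 f t, aterm_lt c y.2.2 f t, dterm_lt d f t]

lemma key (a b c d : WithTop ℝ) (y : R3) (t f : ℝ) :
    tmin a b c d (y.1 + t / 3, y.2.1 + t / 3, y.2.2 + t / 3) = ((f + t : ℝ) : WithTop ℝ) ↔
    tmin2 a b c d f y = ((t : ℝ) : WithTop ℝ) := by
  constructor
  · intro h
    refine le_antisymm (not_lt.mp fun hl => ?_) ((key_le a b c d y t f).mp h.ge)
    exact absurd ((key_lt a b c d y t f).mpr hl) (by rw [h]; exact lt_irrefl _)
  · intro h
    refine le_antisymm (not_lt.mp fun hl => ?_) ((key_le a b c d y t f).mpr h.ge)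
    exact absurd ((key_lt a b c d y t f).mp hl) (by rw [h]; exact lt_irrefl _)

lemma tmin_ne_top (a b c d : WithTop ℝ) (x : R3) : tmin a b c d x ≠ ⊤ :=
  ne_top_of_le_ne_top (WithTop.coe_ne_top (a := (2 * x.1 : ℝ)))
    (le_trans (min_le_left _ _) (le_trans (min_le_left _ _) (min_le_left _ _)))

lemma tmin2_ne_top (a b c d : WithTop ℝ) (f : ℝ) (y : R3) : tmin2 a b c d f y ≠ ⊤ :=
  ne_top_of_le_ne_top (WithTop.coe_ne_top (a := (6 * y.1 - 3 * f : ℝ)))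
    (le_trans (min_le_left _ _) (le_trans (min_le_left _ _) (min_le_left _ _)))

lemma tmin_eq (a b c d : WithTop ℝ) (x : R3) :
    tmin a b c d x = ((f0 a b c d x + (x.1 + x.2.1 + x.2.2) : ℝ) : WithTop ℝ) := by
  obtain ⟨r, hr⟩ := WithTop.ne_top_iff_exists.mp (tmin_ne_top a b c d x)
  rw [f0, ← hr, WithTop.untopD_coe]
  norm_num

lemma tmin2_eq (a b c d : WithTop ℝ) (f : ℝ) (y : R3) :
    tmin2 a b c d f y = ((tau a b c d f y : ℝ) : WithTop ℝ) := by
  obtain ⟨r, hr⟩ := WithTop.ne_top_iff_exists.mp (tmin2_ne_top a b c d f y)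
  rw [tau, ← hr, WithTop.untopD_coe]

lemma cont_untop_tmin (a b c d : WithTop ℝ) :
    Continuous (fun x : R3 => (tmin a b c d x).untopD 0) := by
  induction a using WithTop.recTopCoe <;> induction b using WithTop.recTopCoe <;>
    induction c using WithTop.recTopCoe <;> induction d using WithTop.recTopCoe <;>
  · simp only [tmin, top_add, ← WithTop.coe_add, min_top_left, min_top_right,
      ← WithTop.coe_min, WithTop.untopD_coe]
    fun_prop

lemma cont_tau (a b c d : WithTop ℝ) :
    Continuous (fun p : ℝ × R3 => tau a b c d p.1 p.2) := by
  unfold tau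
  induction a using WithTop.recTopCoe <;> induction b using WithTop.recTopCoe <;>
    induction c using WithTop.recTopCoe <;> induction d using WithTop.recTopCoe <;>
  · simp only [tmin2, top_add, ← WithTop.coe_add, WithTop.map_top, WithTop.map_coe,
      min_top_left, min_top_right, ← WithTop.coe_min, WithTop.untopD_coe]
    fun_prop

lemma cont_f0 (a b c d : WithTop ℝ) : Continuous (f0 a b c d) := by
  unfold f0
  exact (cont_untop_tmin a b c d).sub (by fun_prop)

def Emk (a b c d : WithTop ℝ) : R3 ≃ ℝ × {y : R3 // y.1 + y.2.1 + y.2.2 = 0} where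
  toFun x := (f0 a b c d x,
    ⟨((2 * x.1 - x.2.1 - x.2.2) / 3, (-x.1 + 2 * x.2.1 - x.2.2) / 3,
      (-x.1 - x.2.1 + 2 * x.2.2) / 3), by ring⟩)
  invFun p := ((p.2 : R3).1 + tau a b c d p.1 p.2 / 3,
    (p.2 : R3).2.1 + tau a b c d p.1 p.2 / 3, (p.2 : R3).2.2 + tau a b c d p.1 p.2 / 3)
  left_inv x := by
    dsimp only
    set t := x.1 + x.2.1 + x.2.2 with ht
    set y : R3 := ((2 * x.1 - x.2.1 - x.2.2) / 3, (-x.1 + 2 * x.2.1 - x.2.2) / 3,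
      (-x.1 - x.2.1 + 2 * x.2.2) / 3) with hy
    have hx : (y.1 + t / 3, y.2.1 + t / 3, y.2.2 + t / 3) = x := by
      refine Prod.ext ?_ (Prod.ext ?_ ?_)
      · show (2 * x.1 - x.2.1 - x.2.2) / 3 + (x.1 + x.2.1 + x.2.2) / 3 = x.1; ring
      · show (-x.1 + 2 * x.2.1 - x.2.2) / 3 + (x.1 + x.2.1 + x.2.2) / 3 = x.2.1; ring
      · show (-x.1 - x.2.1 + 2 * x.2.2) / 3 + (x.1 + x.2.1 + x.2.2) / 3 = x.2.2; ring
    have hm : tmin a b c d (y.1 + t / 3, y.2.1 + t / 3, y.2.2 + t / 3) =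
        ((f0 a b c d x + t : ℝ) : WithTop ℝ) := by
      rw [hx]; exact tmin_eq a b c d x
    have htau : tau a b c d (f0 a b c d x) y = t := by
      have h2 := (key a b c d y t (f0 a b c d x)).mp hm
      have h3 := tmin2_eq a b c d (f0 a b c d x) y
      rw [h2] at h3
      exact_mod_cast h3.symm
    rw [htau]
    exact hx
  right_inv p := by
    obtain ⟨f, y, hy⟩ := p
    dsimp only
    set τ := tau a b c d f y with hτ
    have hm2 : tmin2 a b c d f y = ((τ : ℝ) : WithTop ℝ) := tmin2_eq a b c d f y
    have hm : tmin a b c d (y.1 + τ / 3, y.2.1 + τ / 3, y.2.2 + τ / 3) =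
        ((f + τ : ℝ) : WithTop ℝ) := (key a b c d y τ f).mpr hm2
    have hf0 : f0 a b c d (y.1 + τ / 3, y.2.1 + τ / 3, y.2.2 + τ / 3) = f := by
      rw [f0, hm, WithTop.untopD_coe]
      dsimp only
      linarith
    refine Prod.ext hf0 (Subtype.ext ?_)
    refine Prod.ext ?_ (Prod.ext ?_ ?_)
    · show (2 * (y.1 + τ / 3) - (y.2.1 + τ / 3) - (y.2.2 + τ / 3)) / 3 = y.1
      linarith
    · show (-(y.1 + τ / 3) + 2 * (y.2.1 + τ / 3) - (y.2.2 + τ / 3)) / 3 = y.2.1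
      linarith
    · show (-(y.1 + τ / 3) - (y.2.1 + τ / 3) + 2 * (y.2.2 + τ / 3)) / 3 = y.2.2
      linarith

def Hmk (a b c d : WithTop ℝ) : R3 ≃ₜ ℝ × {y : R3 // y.1 + y.2.1 + y.2.2 = 0} where
  toEquiv := Emk a b c d
  continuous_toFun := by
    show Continuous fun x : R3 => ((Emk a b c d) x)
    simp only [Emk, Equiv.coe_fn_mk]
    refine Continuous.prodMk (cont_f0 a b c d) (Continuous.subtype_mk ?_ _)
    fun_prop
  continuous_invFun := by
    show Continuous fun p => (Emk a b c d).symm p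
    simp only [Emk, Equiv.coe_fn_symm_mk]
    have cv : Continuous (fun p : ℝ × {y : R3 // y.1 + y.2.1 + y.2.2 = 0} => (p.2 : R3)) :=
      continuous_subtype_val.comp continuous_snd
    have h : Continuous (fun p : ℝ × {y : R3 // y.1 + y.2.1 + y.2.2 = 0} =>
        tau a b c d p.1 (p.2 : R3)) :=
      (cont_tau a b c d).comp (continuous_fst.prodMk cv)
    refine Continuous.prodMk ?_ (Continuous.prodMk ?_ ?_) <;> fun_prop

theorem statement3 (a b c d : WithTop ℝ) :
    ∃ H : R3 ≃ₜ ℝ × {y : R3 // y.1 + y.2.1 + y.2.2 = 0},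
      ∀ x : R3,
        (H x).1 = f0 a b c d x ∧
        ((H x).2 : R3) =
          ((2 * x.1 - x.2.1 - x.2.2) / 3, (-x.1 + 2 * x.2.1 - x.2.2) / 3,
            (-x.1 - x.2.1 + 2 * x.2.2) / 3) := by
  exact ⟨Hmk a b c d, fun x => ⟨rfl, rfl⟩⟩
end
end

section
/- For every (u₁,u₂) ∈ [0,∞)² with (u₁,u₂) ≠ (0,0), the sequence of 1-norms ‖euc^n(u₁,u₂)‖₁ (the sum of the two coordinates) converges, as n → ∞, to gcd(u₁,u₂). Moreover, if γ := gcd(u₁,u₂) > 0, then there exists N such that for all n ≥ N one has euc^n(u₁,u₂) ∈ {(0,γ), (γ,0)}, with euc swapping these two points. -/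
noncomputable section

open scoped Classical

/-- The Euclidean-algorithm-like transformation `euc` on the first quadrant:
`euc(u₁,u₂) = (u₂, u₁−u₂)` if `u₁ > u₂`, and `(u₂−u₁, u₁)` if `u₁ ≤ u₂`. -/
def euc (u : ℝ × ℝ) : ℝ × ℝ :=
  if u.2 < u.1 then (u.2, u.1 - u.2) else (u.2 - u.1, u.1)

/-- The real `gcd` function: `rgcd a b = g` if `a = p·g`, `b = q·g` for some `g > 0` and
coprime integers `p, q` (this `g` is unique when it exists; it measures rational dependence),
and `rgcd a b = 0` otherwise (in particular when `a, b` are linearly independent over `ℚ`,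
or when `a = b = 0`). -/
def rgcd (a b : ℝ) : ℝ :=
  if h : ∃ g : ℝ, 0 < g ∧ ∃ p q : ℤ, IsCoprime p q ∧ a = p * g ∧ b = q * g then
    h.choose
  else 0

lemma euc_sum (w : ℝ × ℝ) : (euc w).1 + (euc w).2 = max w.1 w.2 := by
  unfold euc
  split_ifs with h
  · dsimp only
    rw [max_eq_left h.le]; ring
  · dsimp only
    rw [max_eq_right (not_lt.1 h)]; ring

lemma euc_nonneg (w : ℝ × ℝ) (h1 : 0 ≤ w.1) (h2 : 0 ≤ w.2) :
    0 ≤ (euc w).1 ∧ 0 ≤ (euc w).2 := by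
  unfold euc
  split_ifs with h
  · exact ⟨h2, by dsimp only; linarith⟩
  · exact ⟨by dsimp only; linarith [not_lt.1 h], h1⟩

lemma euc_ne_zero (w : ℝ × ℝ) (h : w ≠ (0, 0)) : euc w ≠ (0, 0) := by
  intro he
  apply h
  unfold euc at he
  rw [Prod.ext_iff] at he ⊢
  split_ifs at he with hc <;> dsimp only at he ⊢ <;>
    exact ⟨by linarith [he.1, he.2], by linarith [he.1, he.2]⟩

lemma euc_min (w : ℝ × ℝ) :
    min (euc w).1 (euc w).2 = min (min w.1 w.2) (max w.1 w.2 - min w.1 w.2) := by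
  unfold euc
  split_ifs with h
  · dsimp only
    rw [min_eq_right h.le, max_eq_left h.le]
  · have h' := not_lt.1 h
    dsimp only
    rw [min_eq_left h', max_eq_right h', min_comm]

lemma euc_back {c : ℝ} (w : ℝ × ℝ) (a b : ℤ) (hw : euc w = (c * a, c * b)) :
    ∃ a' b' : ℤ, w = (c * a', c * b') := by
  unfold euc at hw
  split_ifs at hw with h <;> rw [Prod.ext_iff] at hw <;> dsimp only at hw
  · refine ⟨a + b, a, ?_⟩
    rw [Prod.ext_iff]
    constructor <;> dsimp only <;> push_cast <;> linarith [hw.1, hw.2]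
  · refine ⟨b, a + b, ?_⟩
    rw [Prod.ext_iff]
    constructor <;> dsimp only <;> push_cast <;> linarith [hw.1, hw.2]

lemma int_gcd_sub (a b : ℤ) : Int.gcd b (a - b) = Int.gcd a b := by
  apply Nat.dvd_antisymm
  · rw [← Int.natCast_dvd_natCast]
    apply Int.dvd_coe_gcd
    · have h1 : (Int.gcd b (a - b) : ℤ) ∣ (a - b) + b :=
        dvd_add (Int.gcd_dvd_right _ _) (Int.gcd_dvd_left _ _)
      simpa using h1
    · exact (Int.gcd_dvd_left _ _)
  · rw [← Int.natCast_dvd_natCast]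
    apply Int.dvd_coe_gcd
    · exact (Int.gcd_dvd_right _ _)
    · exact dvd_sub (Int.gcd_dvd_left _ _) (Int.gcd_dvd_right _ _)

lemma int_gcd_sub' (a b : ℤ) : Int.gcd (b - a) a = Int.gcd a b := by
  apply Nat.dvd_antisymm
  · rw [← Int.natCast_dvd_natCast]
    apply Int.dvd_coe_gcd
    · exact (Int.gcd_dvd_right _ _)
    · have h1 : (Int.gcd (b - a) a : ℤ) ∣ (b - a) + a :=
        dvd_add (Int.gcd_dvd_left _ _) (Int.gcd_dvd_right _ _)
      simpa using h1
  · rw [← Int.natCast_dvd_natCast]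
    apply Int.dvd_coe_gcd
    · exact dvd_sub (Int.gcd_dvd_right _ _) (Int.gcd_dvd_left _ _)
    · exact (Int.gcd_dvd_left _ _)

lemma euc_int_step {c : ℝ} (hc : 0 < c) (w : ℝ × ℝ) (a b : ℤ) (ha : 0 ≤ a) (hb : 0 ≤ b)
    (hw : w = (c * a, c * b)) :
    ∃ a' b' : ℤ, 0 ≤ a' ∧ 0 ≤ b' ∧ euc w = (c * a', c * b') ∧
      Int.gcd a' b' = Int.gcd a b := by
  subst hw
  unfold euc
  dsimp only
  split_ifs with h
  · have hba : (b : ℝ) < a := (mul_lt_mul_iff_right₀ hc).1 h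
    have hba' : b < a := by exact_mod_cast hba
    refine ⟨b, a - b, hb, by omega, ?_, int_gcd_sub a b⟩
    rw [Prod.ext_iff]
    constructor <;> dsimp only <;> push_cast <;> ring
  · have hab : (a : ℝ) ≤ b := (mul_le_mul_iff_right₀ hc).1 (not_lt.1 h)
    have hab' : a ≤ b := by exact_mod_cast hab
    refine ⟨b - a, a, by omega, ha, ?_, int_gcd_sub' a b⟩
    rw [Prod.ext_iff]
    constructor <;> dsimp only <;> push_cast <;> ring

lemma rgcd_eq {a b g : ℝ} (ha : 0 ≤ a) (hb : 0 ≤ b) (hg : 0 < g) (p q : ℤ)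
    (hcop : IsCoprime p q) (hpa : a = p * g) (hqb : b = q * g) : rgcd a b = g := by
  have hex : ∃ g : ℝ, 0 < g ∧ ∃ p q : ℤ, IsCoprime p q ∧ a = p * g ∧ b = q * g :=
    ⟨g, hg, p, q, hcop, hpa, hqb⟩
  rw [rgcd, dif_pos hex]
  obtain ⟨hg', p', q', hcop', hpa', hqb'⟩ := hex.choose_spec
  set g' := hex.choose with hgdef
  have hpnn : 0 ≤ p := by
    have h' : 0 ≤ (p : ℝ) * g := hpa ▸ ha
    have : 0 ≤ (p : ℝ) := by nlinarith
    exact_mod_cast this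
  have hqnn : 0 ≤ q := by
    have h' : 0 ≤ (q : ℝ) * g := hqb ▸ hb
    have : 0 ≤ (q : ℝ) := by nlinarith
    exact_mod_cast this
  have hpnn' : 0 ≤ p' := by
    have h' : 0 ≤ (p' : ℝ) * g' := hpa' ▸ ha
    have : 0 ≤ (p' : ℝ) := by nlinarith
    exact_mod_cast this
  have hqnn' : 0 ≤ q' := by
    have h' : 0 ≤ (q' : ℝ) * g' := hqb' ▸ hb
    have : 0 ≤ (q' : ℝ) := by nlinarith
    exact_mod_cast this
  have hcross : p * q' = p' * q := by
    have e1 : (p' : ℝ) * g' = (p : ℝ) * g := by rw [← hpa', ← hpa]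
    have e2 : (q : ℝ) * g = (q' : ℝ) * g' := by rw [← hqb, ← hqb']
    have hR : ((p * q' : ℤ) : ℝ) * (g' * g) = ((p' * q : ℤ) : ℝ) * (g' * g) := by
      push_cast
      calc (p : ℝ) * q' * (g' * g) = ((p : ℝ) * g) * ((q' : ℝ) * g') := by ring
        _ = ((p' : ℝ) * g') * ((q : ℝ) * g) := by rw [← e1, e2]
        _ = (p' : ℝ) * q * (g' * g) := by ring
    have hgg : (g' * g) ≠ 0 := by positivity
    exact_mod_cast mul_right_cancel₀ hgg hR
  have hpp' : p = p' := by
    refine Int.dvd_antisymm hpnn hpnn' ?_ ?_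
    · exact hcop.dvd_of_dvd_mul_right ⟨q', hcross.symm⟩
    · exact hcop'.dvd_of_dvd_mul_right ⟨q, hcross⟩
  have hqq' : q = q' := by
    have hcross2 : q * p' = q' * p := by linarith [hcross]
    refine Int.dvd_antisymm hqnn hqnn' ?_ ?_
    · exact hcop.symm.dvd_of_dvd_mul_right ⟨p', hcross2.symm⟩
    · exact hcop'.symm.dvd_of_dvd_mul_right ⟨p, hcross2⟩
  have hne : p ≠ 0 ∨ q ≠ 0 := by
    by_contra hcon
    push_neg at hcon
    rw [Int.isCoprime_iff_gcd_eq_one, hcon.1, hcon.2] at hcop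
    simp at hcop
  rcases hne with hp0 | hq0
  · have hpr : ((p : ℝ)) ≠ 0 := Int.cast_ne_zero.2 hp0
    have : (p : ℝ) * g' = (p : ℝ) * g := by rw [hpp', ← hpa', hpa, hpp']
    exact mul_left_cancel₀ hpr this
  · have hqr : ((q : ℝ)) ≠ 0 := Int.cast_ne_zero.2 hq0
    have : (q : ℝ) * g' = (q : ℝ) * g := by rw [hqq', ← hqb', hqb, hqq']
    exact mul_left_cancel₀ hqr this

theorem statement10 (u : ℝ × ℝ) (h1 : 0 ≤ u.1) (h2 : 0 ≤ u.2) (hne : u ≠ (0, 0)) :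
    Filter.Tendsto (fun n => (euc^[n] u).1 + (euc^[n] u).2) Filter.atTop
      (nhds (rgcd u.1 u.2)) ∧
    (0 < rgcd u.1 u.2 →
      (∃ N : ℕ, ∀ n ≥ N,
        euc^[n] u = (0, rgcd u.1 u.2) ∨ euc^[n] u = (rgcd u.1 u.2, 0)) ∧
      euc (0, rgcd u.1 u.2) = (rgcd u.1 u.2, 0) ∧
      euc (rgcd u.1 u.2, 0) = (0, rgcd u.1 u.2)) := by
  have hvs : ∀ n : ℕ, euc^[n + 1] u = euc (euc^[n] u) := fun n =>
    Function.iterate_succ_apply' euc n u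
  have hnn : ∀ n : ℕ, 0 ≤ (euc^[n] u).1 ∧ 0 ≤ (euc^[n] u).2 := by
    intro n
    induction n with
    | zero => exact ⟨h1, h2⟩
    | succ n ih => rw [hvs]; exact euc_nonneg _ ih.1 ih.2
  have hne0 : ∀ n : ℕ, euc^[n] u ≠ (0, 0) := by
    intro n
    induction n with
    | zero => exact hne
    | succ n ih => rw [hvs]; exact euc_ne_zero _ ih
  have hsucc : ∀ n : ℕ,
      (euc^[n + 1] u).1 + (euc^[n + 1] u).2 = max (euc^[n] u).1 (euc^[n] u).2 := by
    intro n; rw [hvs]; exact euc_sum _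
  by_cases hz : ∃ n : ℕ, (euc^[n] u).1 = 0 ∨ (euc^[n] u).2 = 0
  · obtain ⟨N, hN⟩ := hz
    set c := max (euc^[N] u).1 (euc^[N] u).2 with hcdef
    have hc0 : 0 ≤ c := le_trans (hnn N).1 (le_max_left _ _)
    have hc : 0 < c := by
      rcases hc0.lt_or_eq with h | h
      · exact h
      · exfalso; apply hne0 N
        have e1 : (euc^[N] u).1 = 0 :=
          le_antisymm (le_trans (le_max_left _ _) h.symm.le) (hnn N).1
        have e2 : (euc^[N] u).2 = 0 :=
          le_antisymm (le_trans (le_max_right _ _) h.symm.le) (hnn N).2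
        rw [Prod.ext_iff]
        exact ⟨e1, e2⟩
    have hform : euc^[N] u = (0, c) ∨ euc^[N] u = (c, 0) := by
      rcases hN with h | h
      · left
        have hc2 : c = (euc^[N] u).2 := by rw [hcdef, h, max_eq_right (hnn N).2]
        rw [Prod.ext_iff]
        exact ⟨h, hc2.symm⟩
      · right
        have hc1 : c = (euc^[N] u).1 := by rw [hcdef, h, max_eq_left (hnn N).1]
        rw [Prod.ext_iff]
        exact ⟨hc1.symm, h⟩
    have e1 : euc (0, c) = (c, 0) := by
      have hcond : ¬ ((0:ℝ), c).2 < ((0:ℝ), c).1 := by dsimp only; linarith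
      unfold euc; rw [if_neg hcond]
      rw [Prod.ext_iff]; constructor <;> norm_num
    have e2 : euc (c, (0:ℝ)) = (0, c) := by
      have hcond : ((c:ℝ), (0:ℝ)).2 < ((c:ℝ), (0:ℝ)).1 := by dsimp only; linarith
      unfold euc; rw [if_pos hcond]
      rw [Prod.ext_iff]; constructor <;> norm_num
    have hstab : ∀ n, N ≤ n → (euc^[n] u = (0, c) ∨ euc^[n] u = (c, 0)) := by
      intro n hn
      induction n, hn using Nat.le_induction with
      | base => exact hform
      | succ n hn ih =>
        rw [hvs]
        rcases ih with h | h
        · rw [h, e1]; exact Or.inr rfl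
        · rw [h, e2]; exact Or.inl rfl
    have hP : ∀ j : ℕ, ∃ a b : ℤ, euc^[N - j] u = (c * a, c * b) := by
      intro j
      induction j with
      | zero =>
        rw [Nat.sub_zero]
        rcases hform with h | h
        · exact ⟨0, 1, by rw [h]; norm_num [Prod.ext_iff]⟩
        · exact ⟨1, 0, by rw [h]; norm_num [Prod.ext_iff]⟩
      | succ j ih =>
        rcases le_or_gt N j with hj | hj
        · have hidx : N - (j + 1) = N - j := by omega
          rw [hidx]; exact ih
        · obtain ⟨a, b, hab⟩ := ih
          have hidx : N - (j + 1) + 1 = N - j := by omega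
          have hstep : euc (euc^[N - (j + 1)] u) = euc^[N - j] u := by
            rw [← hidx, hvs]
          exact euc_back _ a b (by rw [hstep]; exact hab)
    have hP0 : ∃ a b : ℤ, u = (c * a, c * b) := by
      have := hP N
      rwa [Nat.sub_self, Function.iterate_zero_apply] at this
    obtain ⟨a₀, b₀, h0⟩ := hP0
    have hu1 : u.1 = c * (a₀ : ℝ) := congrArg Prod.fst h0
    have hu2 : u.2 = c * (b₀ : ℝ) := congrArg Prod.snd h0
    have ha₀ : 0 ≤ a₀ := by
      have h' : 0 ≤ c * (a₀ : ℝ) := hu1 ▸ h1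
      have : 0 ≤ (a₀ : ℝ) := by nlinarith
      exact_mod_cast this
    have hb₀ : 0 ≤ b₀ := by
      have h' : 0 ≤ c * (b₀ : ℝ) := hu2 ▸ h2
      have : 0 ≤ (b₀ : ℝ) := by nlinarith
      exact_mod_cast this
    have hR : ∀ n : ℕ, ∃ a b : ℤ, 0 ≤ a ∧ 0 ≤ b ∧
        euc^[n] u = (c * a, c * b) ∧ Int.gcd a b = Int.gcd a₀ b₀ := by
      intro n
      induction n with
      | zero =>
        exact ⟨a₀, b₀, ha₀, hb₀, by rw [Function.iterate_zero_apply]; exact h0, rfl⟩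
      | succ n ih =>
        obtain ⟨a, b, ha, hb, hab, hg⟩ := ih
        obtain ⟨a', b', ha', hb', hab', hg'⟩ := euc_int_step hc _ a b ha hb hab
        exact ⟨a', b', ha', hb', by rw [hvs]; exact hab', by rw [hg', hg]⟩
    have hcop : Int.gcd a₀ b₀ = 1 := by
      obtain ⟨a, b, ha, hb, hab, hg⟩ := hR N
      rcases hform with h | h
      · rw [h] at hab
        have hfst : (0:ℝ) = c * (a : ℝ) := congrArg Prod.fst hab
        have hsnd : c = c * (b : ℝ) := congrArg Prod.snd hab
        have ha0 : a = 0 := by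
          rcases mul_eq_zero.1 hfst.symm with h' | h'
          · exact absurd h' (ne_of_gt hc)
          · exact_mod_cast h'
        have hb1 : b = 1 := by
          have h' : c * (1:ℝ) = c * (b : ℝ) := by rw [mul_one]; exact hsnd
          have : (1:ℝ) = (b : ℝ) := mul_left_cancel₀ (ne_of_gt hc) h'
          exact_mod_cast this.symm
        rw [ha0, hb1] at hg
        simpa using hg.symm
      · rw [h] at hab
        have hfst : c = c * (a : ℝ) := congrArg Prod.fst hab
        have hsnd : (0:ℝ) = c * (b : ℝ) := congrArg Prod.snd hab
        have hb0 : b = 0 := by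
          rcases mul_eq_zero.1 hsnd.symm with h' | h'
          · exact absurd h' (ne_of_gt hc)
          · exact_mod_cast h'
        have ha1 : a = 1 := by
          have h' : c * (1:ℝ) = c * (a : ℝ) := by rw [mul_one]; exact hfst
          have : (1:ℝ) = (a : ℝ) := mul_left_cancel₀ (ne_of_gt hc) h'
          exact_mod_cast this.symm
        rw [ha1, hb0] at hg
        simpa using hg.symm
    have hrg : rgcd u.1 u.2 = c := by
      refine rgcd_eq h1 h2 hc a₀ b₀ (Int.isCoprime_iff_gcd_eq_one.2 hcop) ?_ ?_
      · rw [hu1, mul_comm]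
      · rw [hu2, mul_comm]
    constructor
    · rw [hrg]
      have hev : (fun _ : ℕ => c) =ᶠ[Filter.atTop]
          fun n => (euc^[n] u).1 + (euc^[n] u).2 := by
        rw [Filter.EventuallyEq, Filter.eventually_atTop]
        refine ⟨N, fun n hn => ?_⟩
        rcases hstab n hn with h | h <;> rw [h] <;> norm_num
      exact Filter.Tendsto.congr' hev tendsto_const_nhds
    · rw [hrg]
      intro _
      exact ⟨⟨N, hstab⟩, e1, e2⟩
  · push_neg at hz
    have hpos : ∀ n, 0 < (euc^[n] u).1 ∧ 0 < (euc^[n] u).2 := fun n =>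
      ⟨(hnn n).1.lt_of_ne (Ne.symm (hz n).1), (hnn n).2.lt_of_ne (Ne.symm (hz n).2)⟩
    have hng : ¬ ∃ g : ℝ, 0 < g ∧ ∃ p q : ℤ, IsCoprime p q ∧
        u.1 = p * g ∧ u.2 = q * g := by
      rintro ⟨g, hg, p, q, hcop, hp, hq⟩
      have hpnn : 0 ≤ p := by
        have h' : 0 ≤ (p : ℝ) * g := hp ▸ h1
        have : 0 ≤ (p : ℝ) := by nlinarith
        exact_mod_cast this
      have hqnn : 0 ≤ q := by
        have h' : 0 ≤ (q : ℝ) * g := hq ▸ h2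
        have : 0 ≤ (q : ℝ) := by nlinarith
        exact_mod_cast this
      have hF : ∀ n : ℕ, ∃ a b : ℤ, 0 ≤ a ∧ 0 ≤ b ∧ euc^[n] u = (g * a, g * b) := by
        intro n
        induction n with
        | zero =>
          refine ⟨p, q, hpnn, hqnn, ?_⟩
          rw [Function.iterate_zero_apply, Prod.ext_iff]
          constructor
          · dsimp only; rw [hp]; ring
          · dsimp only; rw [hq]; ring
        | succ n ih =>
          obtain ⟨a, b, ha, hb, hab⟩ := ih
          obtain ⟨a', b', ha', hb', hab', _⟩ := euc_int_step hg _ a b ha hb hab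
          exact ⟨a', b', ha', hb', by rw [hvs]; exact hab'⟩
      have hK : ∀ n : ℕ, ∃ k : ℕ, (euc^[n] u).1 + (euc^[n] u).2 = g * k := by
        intro n
        obtain ⟨a, b, ha, hb, hab⟩ := hF n
        refine ⟨(a + b).toNat, ?_⟩
        have hcast : (((a + b).toNat : ℕ) : ℝ) = (a : ℝ) + b := by
          exact_mod_cast Int.toNat_of_nonneg (by omega : (0:ℤ) ≤ a + b)
        rw [hab, hcast]
        dsimp only
        ring
      choose F hFs using hK
      have hdec : ∀ n, F (n + 1) < F n := by
        intro n
        have hlt : (euc^[n + 1] u).1 + (euc^[n + 1] u).2 <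
            (euc^[n] u).1 + (euc^[n] u).2 := by
          rw [hsucc n]
          exact max_lt (by linarith [(hpos n).2]) (by linarith [(hpos n).1])
        rw [hFs n, hFs (n + 1)] at hlt
        have : (F (n + 1) : ℝ) < F n := (mul_lt_mul_iff_right₀ hg).1 hlt
        exact_mod_cast this
      have hmono : ∀ n, F n + n ≤ F 0 := by
        intro n
        induction n with
        | zero => simp
        | succ n ih => have := hdec n; omega
      have := hmono (F 0 + 1)
      omega
    have hrg : rgcd u.1 u.2 = 0 := by rw [rgcd, dif_neg hng]
    have hanti : Antitone (fun n : ℕ => (euc^[n] u).1 + (euc^[n] u).2) := by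
      apply antitone_nat_of_succ_le
      intro n
      rw [hsucc n]
      exact max_le (le_add_of_nonneg_right (hnn n).2) (le_add_of_nonneg_left (hnn n).1)
    have hbdd : BddBelow (Set.range (fun n : ℕ => (euc^[n] u).1 + (euc^[n] u).2)) := by
      refine ⟨0, ?_⟩
      rintro x ⟨n, rfl⟩
      exact add_nonneg (hnn n).1 (hnn n).2
    have htend : Filter.Tendsto (fun n : ℕ => (euc^[n] u).1 + (euc^[n] u).2)
        Filter.atTop (nhds (⨅ n : ℕ, ((euc^[n] u).1 + (euc^[n] u).2))) :=
      tendsto_atTop_ciInf hanti hbdd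
    have hLle : ∀ n : ℕ, (⨅ n : ℕ, ((euc^[n] u).1 + (euc^[n] u).2)) ≤
        (euc^[n] u).1 + (euc^[n] u).2 := fun n => ciInf_le hbdd n
    have hL0 : 0 ≤ (⨅ n : ℕ, ((euc^[n] u).1 + (euc^[n] u).2)) :=
      le_ciInf (fun n => add_nonneg (hnn n).1 (hnn n).2)
    have hmin : Filter.Tendsto (fun n : ℕ => min (euc^[n] u).1 (euc^[n] u).2)
        Filter.atTop (nhds 0) := by
      have h2' : Filter.Tendsto (fun n : ℕ => (euc^[n + 1] u).1 + (euc^[n + 1] u).2)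
          Filter.atTop (nhds (⨅ n : ℕ, ((euc^[n] u).1 + (euc^[n] u).2))) :=
        htend.comp (Filter.tendsto_add_atTop_nat 1)
      have hsub := htend.sub h2'
      rw [sub_self] at hsub
      apply hsub.congr
      intro n
      rw [hsucc n]
      linarith [min_add_max (euc^[n] u).1 (euc^[n] u).2]
    have hLeq : (⨅ n : ℕ, ((euc^[n] u).1 + (euc^[n] u).2)) = 0 := by
      by_contra hL
      have hLpos : 0 < (⨅ n : ℕ, ((euc^[n] u).1 + (euc^[n] u).2)) :=
        hL0.lt_of_ne (Ne.symm hL)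
      set L := (⨅ n : ℕ, ((euc^[n] u).1 + (euc^[n] u).2)) with hLdef
      obtain ⟨n₀, hn₀⟩ := Filter.eventually_atTop.1
        (hmin.eventually_lt_const (by linarith : (0:ℝ) < L / 2))
      have hconst : ∀ j : ℕ,
          min (euc^[n₀ + j] u).1 (euc^[n₀ + j] u).2 =
            min (euc^[n₀] u).1 (euc^[n₀] u).2 := by
        intro j
        induction j with
        | zero => rfl
        | succ j ih =>
          have hmax : L ≤ max (euc^[n₀ + j] u).1 (euc^[n₀ + j] u).2 := by
            have := hLle (n₀ + j + 1)
            rw [hsucc (n₀ + j)] at this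
            exact this
          have hlt : min (euc^[n₀ + j] u).1 (euc^[n₀ + j] u).2 < L / 2 :=
            hn₀ (n₀ + j) (by omega)
          show min (euc^[(n₀ + j) + 1] u).1 (euc^[(n₀ + j) + 1] u).2 = _
          rw [hvs (n₀ + j), euc_min]
          rw [min_eq_left (by linarith)]
          exact ih
      have hmpos : 0 < min (euc^[n₀] u).1 (euc^[n₀] u).2 :=
        lt_min (hpos n₀).1 (hpos n₀).2
      obtain ⟨n₁, hn₁⟩ := Filter.eventually_atTop.1 (hmin.eventually_lt_const hmpos)
      linarith [hn₁ (n₀ + n₁) (by omega), hconst n₁]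
    constructor
    · rw [hrg]
      rw [hLeq] at htend
      exact htend
    · rw [hrg]
      intro h
      exact absurd h (lt_irrefl 0)
end
end

section
/- For any parameters a, b, c, d ∈ ℝ ∪ {∞}, each map trop(sᵢ) restricts to an involutive bijection of Sk(a,b,c,d), and the group homomorphism from Σ to the group of permutations of Sk(a,b,c,d) that sends the generator σᵢ to this restriction (for i = 1,2,3) is injective. That is, the tropicalized Vieta involutions generate a group acting faithfully on Sk(a,b,c,d) that is isomorphic to the free product (ℤ/2ℤ) ∗ (ℤ/2ℤ) ∗ (ℤ/2ℤ). -/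
noncomputable section

/-- The free product `Σ = (ℤ/2ℤ) ∗ (ℤ/2ℤ) ∗ (ℤ/2ℤ)`. -/
abbrev Sig : Type := Monoid.CoprodI fun _ : Fin 3 => Multiplicative (ZMod 2)

/-- The order-2 generator `σᵢ` of the `i`-th free factor of `Σ`. -/
def sgen (i : Fin 3) : Sig :=
  Monoid.CoprodI.of (M := fun _ : Fin 3 => Multiplicative (ZMod 2)) (i := i)
    (Multiplicative.ofAdd (1 : ZMod 2))

namespace Statement13Aux

lemma minrearr1 {α : Type} [LinearOrder α] (p q r s u v w : α) :
    min (min (min p q) (min r s)) (min (min u v) w)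
      = min (min p s) (min (min q r) (min (min u v) w)) := by
  apply le_antisymm <;> simp [le_min_iff, min_le_iff]

lemma minrearr2 {α : Type} [LinearOrder α] (p q r s u v w : α) :
    min (min (min p q) (min r s)) (min (min u v) w)
      = min (min q u) (min (min p r) (min (min s v) w)) := by
  apply le_antisymm <;> simp [le_min_iff, min_le_iff]

lemma minrearr3 {α : Type} [LinearOrder α] (p q r s u v w : α) :
    min (min (min p q) (min r s)) (min (min u v) w)
      = min (min r v) (min (min p q) (min (min s u) w)) := by
  apply le_antisymm <;> simp [le_min_iff, min_le_iff]

lemma untop'_le {u : WithTop ℝ} {r : ℝ} (h : u ≤ (r : WithTop ℝ)) : u.untopD 0 ≤ r := by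
  cases u with
  | top => simp at h
  | coe v => exact_mod_cast h

lemma exists_coe_le (a : WithTop ℝ) : ∃ r : ℝ, (r : WithTop ℝ) ≤ a := by
  cases a with
  | top => exact ⟨0, le_top⟩
  | coe r => exact ⟨r, le_rfl⟩

def M1 (b c d : WithTop ℝ) (x : R3) : WithTop ℝ :=
  min (min ((2 * x.2.1 : ℝ) : WithTop ℝ) ((2 * x.2.2 : ℝ) : WithTop ℝ))
    (min (min (b + (x.2.1 : WithTop ℝ)) (c + (x.2.2 : WithTop ℝ))) d)

def M2 (a c d : WithTop ℝ) (x : R3) : WithTop ℝ :=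
  min (min ((2 * x.1 : ℝ) : WithTop ℝ) ((2 * x.2.2 : ℝ) : WithTop ℝ))
    (min (min (a + (x.1 : WithTop ℝ)) (c + (x.2.2 : WithTop ℝ))) d)

def M3 (a b d : WithTop ℝ) (x : R3) : WithTop ℝ :=
  min (min ((2 * x.1 : ℝ) : WithTop ℝ) ((2 * x.2.1 : ℝ) : WithTop ℝ))
    (min (min (a + (x.1 : WithTop ℝ)) (b + (x.2.1 : WithTop ℝ))) d)

lemma trop1_eq (a b c d : WithTop ℝ) (x : R3) :
    trop1 a b c d x = ((M1 b c d x).untopD 0 - x.1, x.2.1, x.2.2) := rfl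

lemma trop2_eq (a b c d : WithTop ℝ) (x : R3) :
    trop2 a b c d x = (x.1, (M2 a c d x).untopD 0 - x.2.1, x.2.2) := rfl

lemma trop3_eq (a b c d : WithTop ℝ) (x : R3) :
    trop3 a b c d x = (x.1, x.2.1, (M3 a b d x).untopD 0 - x.2.2) := rfl

lemma M1_ne_top (b c d : WithTop ℝ) (x : R3) : M1 b c d x ≠ ⊤ :=
  ne_top_of_le_ne_top (WithTop.coe_ne_top (a := (2 * x.2.1 : ℝ)))
    ((min_le_left _ _).trans (min_le_left _ _))

lemma M2_ne_top (a c d : WithTop ℝ) (x : R3) : M2 a c d x ≠ ⊤ :=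
  ne_top_of_le_ne_top (WithTop.coe_ne_top (a := (2 * x.1 : ℝ)))
    ((min_le_left _ _).trans (min_le_left _ _))

lemma M3_ne_top (a b d : WithTop ℝ) (x : R3) : M3 a b d x ≠ ⊤ :=
  ne_top_of_le_ne_top (WithTop.coe_ne_top (a := (2 * x.1 : ℝ)))
    ((min_le_left _ _).trans (min_le_left _ _))

lemma tmin_eq1 (a b c d : WithTop ℝ) (x : R3) :
    tmin a b c d x = min (min ((2 * x.1 : ℝ) : WithTop ℝ) (a + (x.1 : WithTop ℝ)))
      (M1 b c d x) := minrearr1 _ _ _ _ _ _ _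

lemma tmin_eq2 (a b c d : WithTop ℝ) (x : R3) :
    tmin a b c d x = min (min ((2 * x.2.1 : ℝ) : WithTop ℝ) (b + (x.2.1 : WithTop ℝ)))
      (M2 a c d x) := minrearr2 _ _ _ _ _ _ _

lemma tmin_eq3 (a b c d : WithTop ℝ) (x : R3) :
    tmin a b c d x = min (min ((2 * x.2.2 : ℝ) : WithTop ℝ) (c + (x.2.2 : WithTop ℝ)))
      (M3 a b d x) := minrearr3 _ _ _ _ _ _ _

lemma tmin_ne_top (a b c d : WithTop ℝ) (x : R3) : tmin a b c d x ≠ ⊤ :=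
  ne_top_of_le_ne_top (WithTop.coe_ne_top (a := (2 * x.1 : ℝ)))
    (le_trans (le_trans (min_le_left _ _) (min_le_left _ _)) (min_le_left _ _))

lemma mem_Sk_iff (a b c d : WithTop ℝ) (x : R3) :
    x ∈ Sk a b c d ↔ tmin a b c d x = ((x.1 + x.2.1 + x.2.2 : ℝ) : WithTop ℝ) := by
  have hne := tmin_ne_top a b c d x
  simp only [Sk, Set.mem_setOf_eq, f0, sub_eq_zero, WithTop.untopD_eq_iff]
  constructor
  · rintro (h | ⟨h, -⟩)
    · exact h
    · exact absurd h hne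
  · exact Or.inl

lemma shift (a : WithTop ℝ) (w v p : ℝ) :
    min (min ((2 * w : ℝ) : WithTop ℝ) (a + (w : WithTop ℝ))) ((w + v : ℝ) : WithTop ℝ)
        = ((w + p : ℝ) : WithTop ℝ)
      ↔ min (min ((w : ℝ) : WithTop ℝ) a) ((v : ℝ) : WithTop ℝ) = ((p : ℝ) : WithTop ℝ) := by
  rw [show (2 * w : ℝ) = w + w by ring, WithTop.coe_add, WithTop.coe_add, WithTop.coe_add,
    add_comm a (w : WithTop ℝ), min_add_add_left, min_add_add_left]
  exact WithTop.add_left_inj (WithTop.coe_ne_top)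

lemma core (a M : WithTop ℝ) (hM : M ≠ ⊤) (u p : ℝ)
    (h : min (min ((2 * u : ℝ) : WithTop ℝ) (a + (u : WithTop ℝ))) M
        = ((u + p : ℝ) : WithTop ℝ)) :
    min (min ((2 * (M.untopD 0 - u) : ℝ) : WithTop ℝ) (a + ((M.untopD 0 - u : ℝ) : WithTop ℝ))) M
        = (((M.untopD 0 - u) + p : ℝ) : WithTop ℝ) := by
  lift M to ℝ using hM with m
  rw [WithTop.untopD_coe] at *
  rw [show (m : WithTop ℝ) = (((m - u) + u : ℝ) : WithTop ℝ) by norm_num, shift]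
  rw [show (m : WithTop ℝ) = ((u + (m - u) : ℝ) : WithTop ℝ) by norm_num, shift] at h
  rw [← h]
  apply le_antisymm <;> simp [le_min_iff, min_le_iff]

lemma trop1_mem {a b c d : WithTop ℝ} {x : R3} (hx : x ∈ Sk a b c d) :
    trop1 a b c d x ∈ Sk a b c d := by
  rw [mem_Sk_iff, tmin_eq1,
    show (x.1 + x.2.1 + x.2.2 : ℝ) = x.1 + (x.2.1 + x.2.2) from by ring] at hx
  have h2 := core a (M1 b c d x) (M1_ne_top b c d x) x.1 (x.2.1 + x.2.2) hx
  rw [mem_Sk_iff, trop1_eq]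
  have h1 : tmin a b c d ((M1 b c d x).untopD 0 - x.1, x.2.1, x.2.2)
      = min (min ((2 * ((M1 b c d x).untopD 0 - x.1) : ℝ) : WithTop ℝ)
          (a + (((M1 b c d x).untopD 0 - x.1 : ℝ) : WithTop ℝ))) (M1 b c d x) := by
    rw [tmin_eq1]; rfl
  rw [h1, h2]
  exact WithTop.coe_eq_coe.mpr (by ring)

lemma trop2_mem {a b c d : WithTop ℝ} {x : R3} (hx : x ∈ Sk a b c d) :
    trop2 a b c d x ∈ Sk a b c d := by
  rw [mem_Sk_iff, tmin_eq2,
    show (x.1 + x.2.1 + x.2.2 : ℝ) = x.2.1 + (x.1 + x.2.2) from by ring] at hx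
  have h2 := core b (M2 a c d x) (M2_ne_top a c d x) x.2.1 (x.1 + x.2.2) hx
  rw [mem_Sk_iff, trop2_eq]
  have h1 : tmin a b c d (x.1, (M2 a c d x).untopD 0 - x.2.1, x.2.2)
      = min (min ((2 * ((M2 a c d x).untopD 0 - x.2.1) : ℝ) : WithTop ℝ)
          (b + (((M2 a c d x).untopD 0 - x.2.1 : ℝ) : WithTop ℝ))) (M2 a c d x) := by
    rw [tmin_eq2]; rfl
  rw [h1, h2]
  exact WithTop.coe_eq_coe.mpr (by ring)

lemma trop3_mem {a b c d : WithTop ℝ} {x : R3} (hx : x ∈ Sk a b c d) :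
    trop3 a b c d x ∈ Sk a b c d := by
  rw [mem_Sk_iff, tmin_eq3,
    show (x.1 + x.2.1 + x.2.2 : ℝ) = x.2.2 + (x.1 + x.2.1) from by ring] at hx
  have h2 := core c (M3 a b d x) (M3_ne_top a b d x) x.2.2 (x.1 + x.2.1) hx
  rw [mem_Sk_iff, trop3_eq]
  have h1 : tmin a b c d (x.1, x.2.1, (M3 a b d x).untopD 0 - x.2.2)
      = min (min ((2 * ((M3 a b d x).untopD 0 - x.2.2) : ℝ) : WithTop ℝ)
          (c + (((M3 a b d x).untopD 0 - x.2.2 : ℝ) : WithTop ℝ))) (M3 a b d x) := by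
    rw [tmin_eq3]; rfl
  rw [h1, h2]
  exact WithTop.coe_eq_coe.mpr (by ring)

lemma trop_zero (a b c d : WithTop ℝ) : trop a b c d 0 = trop1 a b c d := rfl
lemma trop_one (a b c d : WithTop ℝ) : trop a b c d 1 = trop2 a b c d := rfl
lemma trop_two (a b c d : WithTop ℝ) : trop a b c d 2 = trop3 a b c d := rfl

lemma trop_mem {a b c d : WithTop ℝ} (i : Fin 3) {x : R3} (hx : x ∈ Sk a b c d) :
    trop a b c d i x ∈ Sk a b c d := by
  fin_cases i
  · exact trop1_mem hx
  · exact trop2_mem hx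
  · exact trop3_mem hx

lemma trop1_invol (a b c d : WithTop ℝ) (x : R3) :
    trop1 a b c d (trop1 a b c d x) = x := by
  rw [trop1_eq, trop1_eq]
  have h : M1 b c d ((M1 b c d x).untopD 0 - x.1, x.2.1, x.2.2) = M1 b c d x := rfl
  rw [h]
  exact Prod.ext (by simp) rfl

lemma trop2_invol (a b c d : WithTop ℝ) (x : R3) :
    trop2 a b c d (trop2 a b c d x) = x := by
  rw [trop2_eq, trop2_eq]
  have h : M2 a c d (x.1, (M2 a c d x).untopD 0 - x.2.1, x.2.2) = M2 a c d x := rfl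
  rw [h]
  exact Prod.ext rfl (Prod.ext (by simp) rfl)

lemma trop3_invol (a b c d : WithTop ℝ) (x : R3) :
    trop3 a b c d (trop3 a b c d x) = x := by
  rw [trop3_eq, trop3_eq]
  have h : M3 a b d (x.1, x.2.1, (M3 a b d x).untopD 0 - x.2.2) = M3 a b d x := rfl
  rw [h]
  exact Prod.ext rfl (Prod.ext rfl (by simp))

lemma trop_invol (a b c d : WithTop ℝ) (i : Fin 3) (x : R3) :
    trop a b c d i (trop a b c d i x) = x := by
  fin_cases i
  · exact trop1_invol a b c d x
  · exact trop2_invol a b c d x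
  · exact trop3_invol a b c d x

end Statement13Aux

namespace Statement13Aux

variable (a b c d : WithTop ℝ)

def T (i : Fin 3) (x : Sk a b c d) : Sk a b c d :=
  ⟨trop a b c d i x.1, trop_mem i x.2⟩

lemma T_invol (i : Fin 3) : Function.Involutive (T a b c d i) :=
  fun x => Subtype.ext (trop_invol a b c d i x.1)

def e (i : Fin 3) : Equiv.Perm (Sk a b c d) :=
  (T_invol a b c d i).toPerm

lemma e_apply (i : Fin 3) (x : Sk a b c d) :
    ((e a b c d i) x).val = trop a b c d i x.val := rfl

def Xs : Fin 3 → Set (Sk a b c d) :=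
  ![{x | x.1.1 < x.1.2.1 ∧ x.1.1 < x.1.2.2},
    {x | x.1.2.1 < x.1.1 ∧ x.1.2.1 < x.1.2.2},
    {x | x.1.2.2 < x.1.1 ∧ x.1.2.2 < x.1.2.1}]

lemma mem_Xs0 {x : Sk a b c d} :
    x ∈ Xs a b c d 0 ↔ x.val.1 < x.val.2.1 ∧ x.val.1 < x.val.2.2 := Iff.rfl
lemma mem_Xs1 {x : Sk a b c d} :
    x ∈ Xs a b c d 1 ↔ x.val.2.1 < x.val.1 ∧ x.val.2.1 < x.val.2.2 := Iff.rfl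
lemma mem_Xs2 {x : Sk a b c d} :
    x ∈ Xs a b c d 2 ↔ x.val.2.2 < x.val.1 ∧ x.val.2.2 < x.val.2.1 := Iff.rfl

lemma M1_le_b (x : R3) : (M1 b c d x).untopD 0 ≤ 2 * x.2.1 :=
  untop'_le ((min_le_left _ _).trans (min_le_left _ _))
lemma M1_le_c (x : R3) : (M1 b c d x).untopD 0 ≤ 2 * x.2.2 :=
  untop'_le ((min_le_left _ _).trans (min_le_right _ _))
lemma M2_le_a (x : R3) : (M2 a c d x).untopD 0 ≤ 2 * x.1 :=
  untop'_le ((min_le_left _ _).trans (min_le_left _ _))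
lemma M2_le_c (x : R3) : (M2 a c d x).untopD 0 ≤ 2 * x.2.2 :=
  untop'_le ((min_le_left _ _).trans (min_le_right _ _))
lemma M3_le_a (x : R3) : (M3 a b d x).untopD 0 ≤ 2 * x.1 :=
  untop'_le ((min_le_left _ _).trans (min_le_left _ _))
lemma M3_le_b (x : R3) : (M3 a b d x).untopD 0 ≤ 2 * x.2.1 :=
  untop'_le ((min_le_left _ _).trans (min_le_right _ _))

lemma e0_val (x : Sk a b c d) :
    ((e a b c d 0) x).val = ((M1 b c d x.val).untopD 0 - x.val.1, x.val.2.1, x.val.2.2) := rfl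
lemma e1_val (x : Sk a b c d) :
    ((e a b c d 1) x).val = (x.val.1, (M2 a c d x.val).untopD 0 - x.val.2.1, x.val.2.2) := rfl
lemma e2_val (x : Sk a b c d) :
    ((e a b c d 2) x).val = (x.val.1, x.val.2.1, (M3 a b d x.val).untopD 0 - x.val.2.2) := rfl

lemma pp01 {x : Sk a b c d} (hx : x ∈ Xs a b c d 1) : e a b c d 0 x ∈ Xs a b c d 0 := by
  obtain ⟨p, q⟩ := (mem_Xs1 a b c d).mp hx
  have h := M1_le_b b c d x.val
  refine (mem_Xs0 a b c d).mpr ?_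
  rw [e0_val]
  constructor <;> (dsimp only; linarith)

lemma pp02 {x : Sk a b c d} (hx : x ∈ Xs a b c d 2) : e a b c d 0 x ∈ Xs a b c d 0 := by
  obtain ⟨p, q⟩ := (mem_Xs2 a b c d).mp hx
  have h := M1_le_c b c d x.val
  refine (mem_Xs0 a b c d).mpr ?_
  rw [e0_val]
  constructor <;> (dsimp only; linarith)

lemma pp10 {x : Sk a b c d} (hx : x ∈ Xs a b c d 0) : e a b c d 1 x ∈ Xs a b c d 1 := by
  obtain ⟨p, q⟩ := (mem_Xs0 a b c d).mp hx
  have h := M2_le_a a c d x.val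
  refine (mem_Xs1 a b c d).mpr ?_
  rw [e1_val]
  constructor <;> (dsimp only; linarith)

lemma pp12 {x : Sk a b c d} (hx : x ∈ Xs a b c d 2) : e a b c d 1 x ∈ Xs a b c d 1 := by
  obtain ⟨p, q⟩ := (mem_Xs2 a b c d).mp hx
  have h := M2_le_c a c d x.val
  refine (mem_Xs1 a b c d).mpr ?_
  rw [e1_val]
  constructor <;> (dsimp only; linarith)

lemma pp20 {x : Sk a b c d} (hx : x ∈ Xs a b c d 0) : e a b c d 2 x ∈ Xs a b c d 2 := by
  obtain ⟨p, q⟩ := (mem_Xs0 a b c d).mp hx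
  have h := M3_le_a a b d x.val
  refine (mem_Xs2 a b c d).mpr ?_
  rw [e2_val]
  constructor <;> (dsimp only; linarith)

lemma pp21 {x : Sk a b c d} (hx : x ∈ Xs a b c d 1) : e a b c d 2 x ∈ Xs a b c d 2 := by
  obtain ⟨p, q⟩ := (mem_Xs1 a b c d).mp hx
  have h := M3_le_b a b d x.val
  refine (mem_Xs2 a b c d).mpr ?_
  rw [e2_val]
  constructor <;> (dsimp only; linarith)

lemma pp {i j : Fin 3} (hij : i ≠ j) {x : Sk a b c d}
    (hx : x ∈ Xs a b c d j) : e a b c d i x ∈ Xs a b c d i := by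
  fin_cases i <;> fin_cases j
  · exact absurd rfl hij
  · exact pp01 a b c d hx
  · exact pp02 a b c d hx
  · exact pp10 a b c d hx
  · exact absurd rfl hij
  · exact pp12 a b c d hx
  · exact pp20 a b c d hx
  · exact pp21 a b c d hx
  · exact absurd rfl hij

lemma Xdisj : Pairwise (Function.onFun Disjoint (Xs a b c d)) := by
  intro i j hij
  rw [Function.onFun, Set.disjoint_left]
  intro x hxi hxj
  fin_cases i <;> fin_cases j
  · exact absurd rfl hij
  · obtain ⟨p, q⟩ := hxi; obtain ⟨r, s⟩ := hxj; linarith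
  · obtain ⟨p, q⟩ := hxi; obtain ⟨r, s⟩ := hxj; linarith
  · obtain ⟨p, q⟩ := hxi; obtain ⟨r, s⟩ := hxj; linarith
  · exact absurd rfl hij
  · obtain ⟨p, q⟩ := hxi; obtain ⟨r, s⟩ := hxj; linarith
  · obtain ⟨p, q⟩ := hxi; obtain ⟨r, s⟩ := hxj; linarith
  · obtain ⟨p, q⟩ := hxi; obtain ⟨r, s⟩ := hxj; linarith
  · exact absurd rfl hij

lemma coe_le_add {r : ℝ} {a : WithTop ℝ} (hra : (r : WithTop ℝ) ≤ a) (s t : ℝ)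
    (h : s ≤ r + t) : ((s : ℝ) : WithTop ℝ) ≤ a + (t : WithTop ℝ) :=
  calc ((s : ℝ) : WithTop ℝ) ≤ ((r + t : ℝ) : WithTop ℝ) := WithTop.coe_le_coe.mpr h
    _ = (r : WithTop ℝ) + (t : WithTop ℝ) := WithTop.coe_add _ _
    _ ≤ a + (t : WithTop ℝ) := add_le_add_left hra _

lemma lower_bound {a b c d : WithTop ℝ} {ra rb rc rd : ℝ}
    (hra : (ra : WithTop ℝ) ≤ a) (hrb : (rb : WithTop ℝ) ≤ b)
    (hrc : (rc : WithTop ℝ) ≤ c) (hrd : (rd : WithTop ℝ) ≤ d)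
    (x1 x2 x3 : ℝ) (h1 : x1 + x2 + x3 ≤ 2 * x1) (h2 : x1 + x2 + x3 ≤ 2 * x2)
    (h3 : x1 + x2 + x3 ≤ 2 * x3) (h4 : x1 + x2 + x3 ≤ ra + x1)
    (h5 : x1 + x2 + x3 ≤ rb + x2) (h6 : x1 + x2 + x3 ≤ rc + x3)
    (h7 : x1 + x2 + x3 ≤ rd) :
    ((x1 + x2 + x3 : ℝ) : WithTop ℝ) ≤ tmin a b c d (x1, x2, x3) := by
  refine le_min (le_min (le_min ?_ ?_) (le_min ?_ ?_)) (le_min (le_min ?_ ?_) ?_)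
  · exact WithTop.coe_le_coe.mpr h1
  · exact WithTop.coe_le_coe.mpr h2
  · exact WithTop.coe_le_coe.mpr h3
  · exact coe_le_add hra _ _ h4
  · exact coe_le_add hrb _ _ h5
  · exact coe_le_add hrc _ _ h6
  · exact (WithTop.coe_le_coe.mpr h7).trans hrd

lemma Xnonempty (i : Fin 3) : (Xs a b c d i).Nonempty := by
  obtain ⟨ra, hra⟩ := exists_coe_le a
  obtain ⟨rb, hrb⟩ := exists_coe_le b
  obtain ⟨rc, hrc⟩ := exists_coe_le c
  obtain ⟨rd, hrd⟩ := exists_coe_le d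
  set t : ℝ := min (-1) (min (min (ra/3) (min (ra/2) (rd/4)))
    (min (min (rb/2) (rb/3)) (min (rc/2) (rc/3)))) with htdef
  have ht1 : t ≤ -1 := min_le_left _ _
  have g1 : t ≤ ra/3 := le_trans (min_le_right _ _) (le_trans (min_le_left _ _) (min_le_left _ _))
  have g2 : t ≤ ra/2 := le_trans (min_le_right _ _)
    (le_trans (min_le_left _ _) (le_trans (min_le_right _ _) (min_le_left _ _)))
  have g3 : t ≤ rd/4 := le_trans (min_le_right _ _)
    (le_trans (min_le_left _ _) (le_trans (min_le_right _ _) (min_le_right _ _)))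
  have g4 : t ≤ rb/2 := le_trans (min_le_right _ _)
    (le_trans (min_le_right _ _) (le_trans (min_le_left _ _) (min_le_left _ _)))
  have g5 : t ≤ rb/3 := le_trans (min_le_right _ _)
    (le_trans (min_le_right _ _) (le_trans (min_le_left _ _) (min_le_right _ _)))
  have g6 : t ≤ rc/2 := le_trans (min_le_right _ _)
    (le_trans (min_le_right _ _) (le_trans (min_le_right _ _) (min_le_left _ _)))
  have g7 : t ≤ rc/3 := le_trans (min_le_right _ _)
    (le_trans (min_le_right _ _) (le_trans (min_le_right _ _) (min_le_right _ _)))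
  have hta2 : 2*t ≤ ra := by linarith
  have hta3 : 3*t ≤ ra := by linarith
  have htb2 : 2*t ≤ rb := by linarith
  have htb3 : 3*t ≤ rb := by linarith
  have htc2 : 2*t ≤ rc := by linarith
  have htc3 : 3*t ≤ rc := by linarith
  have htd : 4*t ≤ rd := by linarith
  have mem1 : ((2*t, t, t) : R3) ∈ Sk a b c d := by
    refine (mem_Sk_iff a b c d _).mpr (le_antisymm ?_ ?_)
    · refine le_trans (le_trans (le_trans (min_le_left _ _) (min_le_left _ _)) (min_le_left _ _))
        (WithTop.coe_le_coe.mpr ?_)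
      show (2 * (2*t) : ℝ) ≤ 2*t + t + t
      linarith
    · exact lower_bound hra hrb hrc hrd (2*t) t t (by linarith) (by linarith) (by linarith)
        (by linarith) (by linarith) (by linarith) (by linarith)
  have mem2 : ((t, 2*t, t) : R3) ∈ Sk a b c d := by
    refine (mem_Sk_iff a b c d _).mpr (le_antisymm ?_ ?_)
    · refine le_trans (le_trans (le_trans (min_le_left _ _) (min_le_left _ _)) (min_le_right _ _))
        (WithTop.coe_le_coe.mpr ?_)
      show (2 * (2*t) : ℝ) ≤ t + (2*t) + t
      linarith
    · exact lower_bound hra hrb hrc hrd t (2*t) t (by linarith) (by linarith) (by linarith)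
        (by linarith) (by linarith) (by linarith) (by linarith)
  have mem3 : ((t, t, 2*t) : R3) ∈ Sk a b c d := by
    refine (mem_Sk_iff a b c d _).mpr (le_antisymm ?_ ?_)
    · refine le_trans (le_trans (le_trans (min_le_left _ _) (min_le_right _ _)) (min_le_left _ _))
        (WithTop.coe_le_coe.mpr ?_)
      show (2 * (2*t) : ℝ) ≤ t + t + 2*t
      linarith
    · exact lower_bound hra hrb hrc hrd t t (2*t) (by linarith) (by linarith) (by linarith)
        (by linarith) (by linarith) (by linarith) (by linarith)
  fin_cases i
  · exact ⟨⟨_, mem1⟩, (mem_Xs0 a b c d).mpr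
      ⟨show (2*t : ℝ) < t by linarith, show (2*t : ℝ) < t by linarith⟩⟩
  · exact ⟨⟨_, mem2⟩, (mem_Xs1 a b c d).mpr
      ⟨show (2*t : ℝ) < t by linarith, show (2*t : ℝ) < t by linarith⟩⟩
  · exact ⟨⟨_, mem3⟩, (mem_Xs2 a b c d).mpr
      ⟨show (2*t : ℝ) < t by linarith, show (2*t : ℝ) < t by linarith⟩⟩

lemma ne_one_eq {h : Multiplicative (ZMod 2)} (hne : h ≠ 1) :
    h = Multiplicative.ofAdd (1 : ZMod 2) := by
  revert hne; revert h; decide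

end Statement13Aux

open Statement13Aux in
theorem statement13 (a b c d : WithTop ℝ) :
    ∃ e : Fin 3 → Equiv.Perm (Sk a b c d),
      (∀ (i : Fin 3) (x : Sk a b c d), (e i x).val = trop a b c d i x.val) ∧
      (∀ i : Fin 3, e i * e i = 1) ∧
      ∀ φ : Sig →* Equiv.Perm (Sk a b c d),
        (∀ i : Fin 3, φ (sgen i) = e i) → Function.Injective φ := by
  refine ⟨Statement13Aux.e a b c d, fun i x => rfl, fun i => ?_, ?_⟩
  · refine Equiv.ext fun x => ?_
    rw [Equiv.Perm.mul_apply, Equiv.Perm.one_apply]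
    exact (T_invol a b c d i) x
  · intro φ hφ
    have hlift : Monoid.CoprodI.lift (fun i => φ.comp
        (Monoid.CoprodI.of (M := fun _ : Fin 3 => Multiplicative (ZMod 2)) (i := i))) = φ := by
      apply Monoid.CoprodI.ext_hom
      intro i
      refine MonoidHom.ext fun h => ?_
      rw [MonoidHom.comp_apply, MonoidHom.comp_apply, Monoid.CoprodI.lift_of]
      rfl
    rw [← hlift]
    apply Monoid.CoprodI.lift_injective_of_ping_pong _ ?_ (Xs a b c d)
      (Xnonempty a b c d) (Xdisj a b c d) ?_
    · left
      norm_num [Cardinal.mk_fin]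
    · intro i j hij h hne
      rw [ne_one_eq hne]
      intro y hy
      rw [Set.mem_smul_set] at hy
      obtain ⟨x, hx, rfl⟩ := hy
      have heq : (φ.comp (Monoid.CoprodI.of (M := fun _ : Fin 3 => Multiplicative (ZMod 2)) (i := i)))
          (Multiplicative.ofAdd (1 : ZMod 2)) = Statement13Aux.e a b c d i := hφ i
      rw [Equiv.Perm.smul_def, heq]
      exact pp a b c d hij hx
end
end

section
/- Let X and Y be topological spaces with continuous Σ-actions carrying fat ping-pong structures (X₁,X₂,X₃) with ping-pong table X₀ and (Y₁,Y₂,Y₃) with ping-pong table Y₀, respectively. Then every continuous map ψ : X₀ → Y₀ satisfying ψ(X₀ ∩ cl(Xᵢ)) ⊆ Y₀ ∩ cl(Yᵢ) for i = 1, 2, 3 extends to a continuous Σ-equivariant map Ψ : Σ·X₀ → Σ·Y₀ (so Ψ agrees with ψ on X₀ and Ψ(σ·x) = σ·Ψ(x) for all σ ∈ Σ and x ∈ Σ·X₀). -/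
noncomputable section

/-- The ping-pong table `X₀ = (X ∖ ⋃ᵢ cl(Xᵢ)) ∪ ⋃ᵢ Lᵢ`,
where `Lᵢ = ∂Xᵢ ∖ ⋃_{j≠i} cl(Xⱼ)` are the ping-pong nets. -/
def pingPongTable {X : Type*} [TopologicalSpace X] (Xs : Fin 3 → Set X) : Set X :=
  (Set.univ \ ⋃ i, closure (Xs i)) ∪
    ⋃ i, (frontier (Xs i) \ ⋃ (j) (_ : j ≠ i), closure (Xs j))

/-- A ping-pong structure on a `Σ`-space `X`: pairwise disjoint open sets `X₁, X₂, X₃`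
such that `σⱼ·Xᵢ ⊆ Xⱼ` for `i ≠ j`, `σᵢ` fixes `∂Xᵢ` pointwise, and `σᵢ` maps `Xᵢ`
onto `X ∖ cl(Xᵢ)`. -/
def IsPingPong {X : Type*} [TopologicalSpace X] [MulAction Sig X]
    (Xs : Fin 3 → Set X) : Prop :=
  (∀ i, IsOpen (Xs i)) ∧
  (Pairwise fun i j => Disjoint (Xs i) (Xs j)) ∧
  (∀ i j, i ≠ j → (fun x => sgen j • x) '' Xs i ⊆ Xs j) ∧
  (∀ i, ∀ x ∈ frontier (Xs i), sgen i • x = x) ∧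
  (∀ i, (fun x => sgen i • x) '' Xs i = (closure (Xs i))ᶜ)

/-- The orbit `Σ·S` of a subset `S` of a `Σ`-space. -/
def sigOrbit {X : Type*} [MulAction Sig X] (S : Set X) : Set X :=
  {y | ∃ (g : Sig), ∃ x ∈ S, y = g • x}

lemma sgen_mul_self (i : Fin 3) : sgen i * sgen i = 1 := by
  unfold sgen
  rw [← map_mul]
  have : (Multiplicative.ofAdd (1 : ZMod 2)) * (Multiplicative.ofAdd (1 : ZMod 2)) = 1 := by
    decide
  rw [this, map_one]

lemma sgen_smul_smul {X : Type*} [MulAction Sig X] (i : Fin 3) (x : X) :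
    sgen i • sgen i • x = x := by
  rw [smul_smul, sgen_mul_self, one_smul]

lemma exists_word (g : Sig) :
    ∃ l : List (Fin 3), l.Chain' (· ≠ ·) ∧ g = (l.map sgen).prod := by
  classical
  set w := Monoid.CoprodI.Word.equiv (M := fun _ : Fin 3 => Multiplicative (ZMod 2)) g with hw
  refine ⟨w.toList.map Sigma.fst, ?_, ?_⟩
  · exact List.isChain_map_of_isChain Sigma.fst (fun _ _ h => h) w.chain_ne
  · have hg : g = w.prod := by
      rw [hw]
      exact (Monoid.CoprodI.Word.equiv.symm_apply_apply g).symm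
    rw [hg]
    unfold Monoid.CoprodI.Word.prod
    rw [List.map_map]
    congr 1
    refine List.map_congr_left ?_
    intro a ha
    have h1 : a.snd ≠ 1 := w.ne_one a ha
    have h2 : a.snd = Multiplicative.ofAdd (1 : ZMod 2) := by
      revert h1
      exact (by decide : ∀ b : Multiplicative (ZMod 2),
        b ≠ 1 → b = Multiplicative.ofAdd 1) a.snd
    simp only [Function.comp_apply]
    rw [h2]; rfl

theorem statement14 {X Y : Type*} [TopologicalSpace X] [TopologicalSpace Y]
    [MulAction Sig X] [MulAction Sig Y]
    (hcX : ∀ g : Sig, Continuous fun x : X => g • x)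
    (hcY : ∀ g : Sig, Continuous fun y : Y => g • y)
    (Xs : Fin 3 → Set X) (Ys : Fin 3 → Set Y)
    (hX : IsPingPong Xs) (hY : IsPingPong Ys)
    (hXfat : (interior (pingPongTable Xs)).Nonempty)
    (hYfat : (interior (pingPongTable Ys)).Nonempty)
    (ψ : X → Y)
    (hψc : ContinuousOn ψ (pingPongTable Xs))
    (hψ0 : Set.MapsTo ψ (pingPongTable Xs) (pingPongTable Ys))
    (hψnets : ∀ i, Set.MapsTo ψ (pingPongTable Xs ∩ closure (Xs i))
      (pingPongTable Ys ∩ closure (Ys i))) :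
    ∃ Ψ : X → Y,
      ContinuousOn Ψ (sigOrbit (pingPongTable Xs)) ∧
      (∀ x ∈ pingPongTable Xs, Ψ x = ψ x) ∧
      (∀ (g : Sig), ∀ x ∈ sigOrbit (pingPongTable Xs), Ψ (g • x) = g • Ψ x) ∧
      Set.MapsTo Ψ (sigOrbit (pingPongTable Xs)) (sigOrbit (pingPongTable Ys)) := by
  classical
  obtain ⟨hXopen, hXdisj, hXmove, hXfix, hXflip⟩ := hX
  obtain ⟨hYopen, hYdisj, hYmove, hYfix, hYflip⟩ := hY
  -- basic membership lemmas for the table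
  have hmemT : ∀ z : X, (∀ j, z ∉ closure (Xs j)) → z ∈ pingPongTable Xs := by
    intro z hz
    exact Set.mem_union_left _ ⟨Set.mem_univ z, by simpa using hz⟩
  have hmemTL : ∀ (i : Fin 3) (z : X), z ∈ frontier (Xs i) →
      (∀ j, j ≠ i → z ∉ closure (Xs j)) → z ∈ pingPongTable Xs := by
    intro i z h1 h2
    refine Set.mem_union_right _ (Set.mem_iUnion.2 ⟨i, h1, ?_⟩)
    simpa using h2
  have hTfr : ∀ (i : Fin 3) (z : X), z ∈ pingPongTable Xs → z ∈ closure (Xs i) →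
      z ∈ frontier (Xs i) := by
    intro i z hz hcl
    rcases hz with ⟨-, hz⟩ | hz
    · exact absurd (Set.mem_iUnion.2 ⟨i, hcl⟩) hz
    · rcases Set.mem_iUnion.1 hz with ⟨k, hk1, hk2⟩
      by_cases hki : k = i
      · rw [← hki]; exact hk1
      · exact absurd (Set.mem_iUnion.2 ⟨i, Set.mem_iUnion.2
          ⟨fun h => hki h.symm, hcl⟩⟩) hk2
  have hSfr : ∀ (i : Fin 3) (z : Y), z ∈ pingPongTable Ys → z ∈ closure (Ys i) →
      z ∈ frontier (Ys i) := by
    intro i z hz hcl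
    rcases hz with ⟨-, hz⟩ | hz
    · exact absurd (Set.mem_iUnion.2 ⟨i, hcl⟩) hz
    · rcases Set.mem_iUnion.1 hz with ⟨k, hk1, hk2⟩
      by_cases hki : k = i
      · rw [← hki]; exact hk1
      · exact absurd (Set.mem_iUnion.2 ⟨i, Set.mem_iUnion.2
          ⟨fun h => hki h.symm, hcl⟩⟩) hk2
  have hfixX : ∀ (i : Fin 3) (z : X), z ∈ pingPongTable Xs → z ∈ closure (Xs i) →
      sgen i • z = z := fun i z hz hc => hXfix i z (hTfr i z hz hc)
  have hψfix : ∀ (i : Fin 3) (x : X), x ∈ pingPongTable Xs → x ∈ closure (Xs i) →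
      sgen i • ψ x = ψ x := by
    intro i x h1 h2
    have h3 := hψnets i ⟨h1, h2⟩
    exact hYfix i _ (hSfr i _ h3.1 h3.2)
  have hclmove : ∀ i j : Fin 3, i ≠ j → ∀ z ∈ closure (Xs j),
      sgen i • z ∈ closure (Xs i) := by
    intro i j hij z hz
    have h1 : (fun x : X => sgen i • x) '' closure (Xs j) ⊆
        closure ((fun x : X => sgen i • x) '' Xs j) :=
      image_closure_subset_closure_image (hcX _)
    have h2 : closure ((fun x : X => sgen i • x) '' Xs j) ⊆ closure (Xs i) :=
      closure_mono (hXmove j i (Ne.symm hij))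
    exact h2 (h1 (Set.mem_image_of_mem _ hz))
  have hflipX : ∀ (i : Fin 3) (z : X), z ∈ Xs i → sgen i • z ∉ closure (Xs i) := by
    intro i z hz
    have h := Set.mem_image_of_mem (fun x : X => sgen i • x) hz
    rw [hXflip i] at h
    exact h
  have hcompl : ∀ (i : Fin 3) (z : X), z ∉ closure (Xs i) → sgen i • z ∈ Xs i := by
    intro i z hz
    have h : z ∈ (closure (Xs i))ᶜ := hz
    rw [← hXflip i] at h
    rcases h with ⟨y, hy, hyz⟩
    have hzy : sgen i • z = y := by rw [← hyz, sgen_smul_smul]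
    rw [hzy]; exact hy
  have hsmulT : ∀ (i : Fin 3) (z : X), z ∈ pingPongTable Xs →
      sgen i • z ∈ closure (Xs i) := by
    intro i z hz
    by_cases hc : z ∈ closure (Xs i)
    · rw [hfixX i z hz hc]; exact hc
    · exact subset_closure (hcompl i z hc)
  -- the trap lemma
  have htrap : ∀ (t : List (Fin 3)) (i : Fin 3), (i :: t).Chain' (· ≠ ·) →
      ∀ z ∈ pingPongTable Xs, ((i :: t).map sgen).prod • z ∈ closure (Xs i) := by
    intro t
    induction t with
    | nil =>
      intro i _ z hz
      simpa using hsmulT i z hz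
    | cons j t' ih =>
      intro i hchain z hz
      have hij : i ≠ j := (List.isChain_cons_cons.1 hchain).1
      have h2 := ih j (List.isChain_cons_cons.1 hchain).2 z hz
      have heq : ((i :: j :: t').map sgen).prod • z =
          sgen i • (((j :: t').map sgen).prod • z) := by
        simp [mul_smul]
      rw [heq]
      exact hclmove i j hij _ h2
  -- well-definedness along reduced words
  have hWDl : ∀ l : List (Fin 3), l.Chain' (· ≠ ·) →
      ∀ x ∈ pingPongTable Xs, ∀ x' ∈ pingPongTable Xs,
        (l.map sgen).prod • x = x' → (l.map sgen).prod • ψ x = ψ x' := by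
    intro l
    induction l with
    | nil =>
      intro _ x _ x' _ h
      simp only [List.map_nil, List.prod_nil, one_smul] at h ⊢
      rw [h]
    | cons i t ih =>
      intro hchain x hx x' hx' heq
      have hcl : x' ∈ closure (Xs i) := heq ▸ htrap t i hchain x hx
      have hfix := hfixX i x' hx' hcl
      have ht : ((t.map sgen)).prod • x = x' := by
        have h1 : sgen i • (((t.map sgen)).prod • x) = x' := by
          rw [← heq]; simp [mul_smul]
        have h2 := congrArg (fun w : X => sgen i • w) h1
        rw [sgen_smul_smul] at h2
        rw [h2, hfix]
      have h2 := ih hchain.tail x hx x' hx' ht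
      have h3 : ((i :: t).map sgen).prod • ψ x =
          sgen i • (((t.map sgen)).prod • ψ x) := by
        simp [mul_smul]
      rw [h3, h2, hψfix i x' hx' hcl]
  have hWD : ∀ (g : Sig) (x : X), x ∈ pingPongTable Xs →
      ∀ x', x' ∈ pingPongTable Xs → g • x = x' → g • ψ x = ψ x' := by
    intro g x hx x' hx' h
    obtain ⟨l, hc, rfl⟩ := exists_word g
    exact hWDl l hc x hx x' hx' h
  -- construction of Ψ
  have hrep : ∀ z ∈ sigOrbit (pingPongTable Xs),
      ∃ p : Sig × X, p.2 ∈ pingPongTable Xs ∧ z = p.1 • p.2 := by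
    intro z hz
    obtain ⟨g, x, hx, hzx⟩ := hz
    exact ⟨(g, x), hx, hzx⟩
  set Ψ : X → Y := fun z =>
    if h : z ∈ sigOrbit (pingPongTable Xs) then
      (hrep z h).choose.1 • ψ (hrep z h).choose.2
    else ψ z with hΨdef
  have hspec : ∀ z (hz : z ∈ sigOrbit (pingPongTable Xs)) (g : Sig) (x : X),
      x ∈ pingPongTable Xs → z = g • x → Ψ z = g • ψ x := by
    intro z hz g x hx hzx
    have hd : Ψ z = (hrep z hz).choose.1 • ψ (hrep z hz).choose.2 := by
      rw [hΨdef]; exact dif_pos hz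
    obtain ⟨hx1, hz1⟩ := (hrep z hz).choose_spec
    set p := (hrep z hz).choose with hp
    have he : (p.1⁻¹ * g) • x = p.2 := by
      have h := congrArg (fun w : X => p.1⁻¹ • w) hz1
      rw [inv_smul_smul] at h
      rw [mul_smul, ← hzx]
      exact h
    have hw := hWD _ x hx _ hx1 he
    rw [hd, ← hw, mul_smul, smul_inv_smul]
  have horbmem : ∀ x ∈ pingPongTable Xs, x ∈ sigOrbit (pingPongTable Xs) :=
    fun x hx => ⟨1, x, hx, (one_smul _ _).symm⟩
  have hΨeq : ∀ x ∈ pingPongTable Xs, Ψ x = ψ x := by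
    intro x hx
    rw [hspec x (horbmem x hx) 1 x hx (one_smul _ _).symm, one_smul]
  have hsmulorb : ∀ (g : Sig), ∀ z ∈ sigOrbit (pingPongTable Xs),
      g • z ∈ sigOrbit (pingPongTable Xs) := by
    rintro g z ⟨h, x, hx, rfl⟩
    exact ⟨g * h, x, hx, (mul_smul g h x).symm⟩
  have hequi : ∀ (g : Sig), ∀ z ∈ sigOrbit (pingPongTable Xs),
      Ψ (g • z) = g • Ψ z := by
    rintro g z ⟨h, x, hx, rfl⟩
    have h1 : Ψ (h • x) = h • ψ x := hspec _ ⟨h, x, hx, rfl⟩ h x hx rfl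
    have h2 : Ψ (g • h • x) = (g * h) • ψ x :=
      hspec _ ⟨g * h, x, hx, (mul_smul g h x).symm⟩ (g * h) x hx (mul_smul g h x).symm
    rw [h1, h2, mul_smul]
  have hmapsto : Set.MapsTo Ψ (sigOrbit (pingPongTable Xs))
      (sigOrbit (pingPongTable Ys)) := by
    intro z hz
    obtain ⟨g, x, hx, hzx⟩ := hz
    rw [hspec z ⟨g, x, hx, hzx⟩ g x hx hzx]
    exact ⟨g, ψ x, hψ0 hx, rfl⟩
  -- continuity
  have hψcw : ∀ x ∈ pingPongTable Xs, ContinuousWithinAt Ψ (pingPongTable Xs) x := by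
    intro x hx
    exact (hψc x hx).congr (fun y hy => hΨeq y hy) (hΨeq x hx)
  have hW0open : IsOpen {z : X | ∀ j, z ∉ closure (Xs j)} := by
    have heq : {z : X | ∀ j, z ∉ closure (Xs j)} =
        ⋂ j, (closure (Xs j))ᶜ := by
      ext z; simp [Set.mem_iInter]
    rw [heq]
    exact isOpen_iInter_of_finite fun j => isClosed_closure.isOpen_compl
  have hWopen : ∀ i : Fin 3, IsOpen {z : X | ∀ j, j ≠ i → z ∉ closure (Xs j)} := by
    intro i
    have heq : {z : X | ∀ j, j ≠ i → z ∉ closure (Xs j)} =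
        ⋂ (j : {j : Fin 3 // j ≠ i}), (closure (Xs j.1))ᶜ := by
      ext z
      simp only [Set.mem_iInter, Set.mem_setOf_eq, Set.mem_compl_iff, Subtype.forall]
    rw [heq]
    exact isOpen_iInter_of_finite fun j => isClosed_closure.isOpen_compl
  have hcwa0 : ∀ x₀ ∈ pingPongTable Xs,
      ContinuousWithinAt Ψ (sigOrbit (pingPongTable Xs)) x₀ := by
    intro x₀ hx₀
    rcases hx₀ with hA | hB
    · -- interior case
      have hx₀' : x₀ ∈ pingPongTable Xs := Set.mem_union_left _ hA
      have hx₀U : x₀ ∈ {z : X | ∀ j, z ∉ closure (Xs j)} := by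
        intro j hj
        exact hA.2 (Set.mem_iUnion.2 ⟨j, hj⟩)
      have hU : {z : X | ∀ j, z ∉ closure (Xs j)} ∈ nhds x₀ :=
        hW0open.mem_nhds hx₀U
      have hsub : sigOrbit (pingPongTable Xs) ∩ {z : X | ∀ j, z ∉ closure (Xs j)} ⊆
          pingPongTable Xs := fun z hz => hmemT z hz.2
      exact (continuousWithinAt_inter hU).1 ((hψcw x₀ hx₀').mono hsub)
    · -- net case
      obtain ⟨i, hfr, hni'⟩ := Set.mem_iUnion.1 hB
      have hni : ∀ j, j ≠ i → x₀ ∉ closure (Xs j) := by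
        intro j hj hc
        exact hni' (Set.mem_iUnion.2 ⟨j, Set.mem_iUnion.2 ⟨hj, hc⟩⟩)
      have hx₀' : x₀ ∈ pingPongTable Xs := hmemTL i x₀ hfr hni
      have hfx : sgen i • x₀ = x₀ := hXfix i x₀ hfr
      have hx₀cl : x₀ ∈ closure (Xs i) := frontier_subset_closure hfr
      set W := {z : X | ∀ j, j ≠ i → z ∉ closure (Xs j)} with hWdef
      set U := W ∩ (fun z : X => sgen i • z) ⁻¹' W with hUdef
      have hUopen : IsOpen U := (hWopen i).inter ((hWopen i).preimage (hcX (sgen i)))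
      have hx₀U : x₀ ∈ U := by
        constructor
        · exact hni
        · show sgen i • x₀ ∈ W
          rw [hfx]; exact hni
      have hUmem : U ∈ nhds x₀ := hUopen.mem_nhds hx₀U
      have hsub : U ⊆ pingPongTable Xs ∪ (fun z : X => sgen i • z) '' pingPongTable Xs := by
        rintro z ⟨hzW, hzP⟩
        by_cases hzc : z ∈ closure (Xs i)
        · by_cases hzi : z ∈ Xs i
          · right
            have hw1 : sgen i • z ∉ closure (Xs i) := hflipX i z hzi
            have hw2 : sgen i • z ∈ pingPongTable Xs := by
              refine hmemT _ fun j => ?_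
              by_cases hj : j = i
              · rw [hj]; exact hw1
              · exact hzP j hj
            exact ⟨sgen i • z, hw2, sgen_smul_smul i z⟩
          · left
            have hzfr : z ∈ frontier (Xs i) := by
              refine ⟨hzc, ?_⟩
              rw [(hXopen i).interior_eq]
              exact hzi
            exact hmemTL i z hzfr hzW
        · left
          refine hmemT z fun j => ?_
          by_cases hj : j = i
          · rw [hj]; exact hzc
          · exact hzW j hj
      have hc1 : ContinuousWithinAt Ψ (pingPongTable Xs) x₀ := hψcw x₀ hx₀'
      have hc2 : ContinuousWithinAt Ψ ((fun z : X => sgen i • z) '' pingPongTable Xs) x₀ := by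
        have hmaps : Set.MapsTo (fun z : X => sgen i • z)
            ((fun z : X => sgen i • z) '' pingPongTable Xs) (pingPongTable Xs) := by
          rintro z ⟨w, hw, rfl⟩
          simpa [sgen_smul_smul] using hw
        have h1 : ContinuousWithinAt ψ (pingPongTable Xs) (sgen i • x₀) := by
          rw [hfx]; exact hψc x₀ hx₀'
        have hinner : ContinuousWithinAt (ψ ∘ fun z : X => sgen i • z)
            ((fun z : X => sgen i • z) '' pingPongTable Xs) x₀ :=
          h1.comp ((hcX (sgen i)).continuousWithinAt) hmaps
        have houter : ContinuousWithinAt ((fun y : Y => sgen i • y) ∘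
            (ψ ∘ fun z : X => sgen i • z))
            ((fun z : X => sgen i • z) '' pingPongTable Xs) x₀ :=
          ((hcY (sgen i)).continuousAt).comp_continuousWithinAt hinner
        refine houter.congr ?_ ?_
        · rintro z ⟨w, hw, rfl⟩
          show Ψ (sgen i • w) = sgen i • ψ (sgen i • sgen i • w)
          rw [hspec (sgen i • w) ⟨sgen i, w, hw, rfl⟩ (sgen i) w hw rfl, sgen_smul_smul]
        · show Ψ x₀ = sgen i • ψ (sgen i • x₀)
          rw [hΨeq x₀ hx₀', hfx, hψfix i x₀ hx₀' hx₀cl]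
      have hc12 : ContinuousWithinAt Ψ
          (pingPongTable Xs ∪ (fun z : X => sgen i • z) '' pingPongTable Xs) x₀ :=
        hc1.union hc2
      have hc3 : ContinuousWithinAt Ψ (sigOrbit (pingPongTable Xs) ∩ U) x₀ :=
        hc12.mono fun z hz => hsub hz.2
      exact (continuousWithinAt_inter hUmem).1 hc3
  have hcont : ContinuousOn Ψ (sigOrbit (pingPongTable Xs)) := by
    intro z hz
    obtain ⟨g, x₀, hx₀, rfl⟩ := hz
    have hbase := hcwa0 x₀ hx₀
    have hpt : g⁻¹ • g • x₀ = x₀ := inv_smul_smul g x₀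
    have hbase' : ContinuousWithinAt Ψ (sigOrbit (pingPongTable Xs)) (g⁻¹ • g • x₀) := by
      rw [hpt]; exact hbase
    have hinner : ContinuousWithinAt (Ψ ∘ fun w : X => g⁻¹ • w)
        (sigOrbit (pingPongTable Xs)) (g • x₀) :=
      hbase'.comp ((hcX g⁻¹).continuousWithinAt) (fun w hw => hsmulorb g⁻¹ w hw)
    have houter : ContinuousWithinAt ((fun y : Y => g • y) ∘ (Ψ ∘ fun w : X => g⁻¹ • w))
        (sigOrbit (pingPongTable Xs)) (g • x₀) :=
      ((hcY g).continuousAt).comp_continuousWithinAt hinner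
    refine houter.congr ?_ ?_
    · intro w hw
      show Ψ w = g • Ψ (g⁻¹ • w)
      have h1 : Ψ (g • g⁻¹ • w) = g • Ψ (g⁻¹ • w) :=
        hequi g _ (hsmulorb g⁻¹ w hw)
      rw [← h1, smul_inv_smul]
    · show Ψ (g • x₀) = g • Ψ (g⁻¹ • g • x₀)
      rw [hpt]
      exact hequi g x₀ (horbmem x₀ hx₀)
  exact ⟨Ψ, hcont, hΨeq, fun g z hz => hequi g z hz, hmapsto⟩
end
end
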